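/- arXiv:1607.02037 — 16 statements merged into one kernel-verified Lean document; each statement's English description precedes it below -/
import Mathlib

section
/- A binary (0-1) vector x ∈ {0,1}^n is a solution to the linear complementarity problem LCP(G) — i.e., x ≥ 0, (A+I)x ≥ 1, and xᵀ((A+I)x − 1) = 0, where A is the adjacency matrix of a graph G on n vertices — if and only if x is the characteristic vector of a maximal independent set of G. -/
/-- Effort of the closed neighbourhood: `((A+I)x)_i = x_i + ∑_{j ~ i} x_j`. -/
def cnSum {n : ℕ} (G : SimpleGraph (Fin n)) [DecidableRel G.Adj]
    (x : Fin n → ℝ) (i : Fin n) : ℝ :=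
  x i + ∑ j ∈ G.neighborFinset i, x j

/-- `x` solves LCP(G): `x ≥ 0`, `(A+I)x ≥ 1`, `xᵀ((A+I)x - 1) = 0`. -/
def IsLCPSol {n : ℕ} (G : SimpleGraph (Fin n)) [DecidableRel G.Adj]
    (x : Fin n → ℝ) : Prop :=
  (∀ i, 0 ≤ x i) ∧ (∀ i, 1 ≤ cnSum G x i) ∧
    (∑ i, x i * (cnSum G x i - 1)) = 0

/-- `S` is an independent set of `G`: no two vertices of `S` are adjacent. -/
def IsIndep {n : ℕ} (G : SimpleGraph (Fin n)) (S : Finset (Fin n)) : Prop :=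
  ∀ i ∈ S, ∀ j ∈ S, ¬ G.Adj i j

/-- `S` is a maximal independent set of `G`. -/
def IsMaxIndep {n : ℕ} (G : SimpleGraph (Fin n)) (S : Finset (Fin n)) : Prop :=
  IsIndep G S ∧ ∀ T : Finset (Fin n), IsIndep G T → S ⊆ T → T = S

/-- A 0-1 vector solves LCP(G) iff it is the characteristic vector of a
maximal independent set of `G`. -/
theorem stmt_0 {n : ℕ} (G : SimpleGraph (Fin n)) [DecidableRel G.Adj]
    (x : Fin n → ℝ) (hbin : ∀ i, x i = 0 ∨ x i = 1) :
    IsLCPSol G x ↔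
      ∃ S : Finset (Fin n), IsMaxIndep G S ∧
        ∀ i, x i = if i ∈ S then 1 else 0 := by
  classical
  constructor
  · rintro ⟨hpos, hge, hcomp⟩
    set S : Finset (Fin n) := Finset.univ.filter (fun i => x i = 1) with hS
    have hmemS : ∀ i, i ∈ S ↔ x i = 1 := by
      intro i; simp [hS]
    -- each complementarity term is zero
    have hterm : ∀ i, x i * (cnSum G x i - 1) = 0 := by
      have hnn : ∀ i ∈ Finset.univ, 0 ≤ x i * (cnSum G x i - 1) := by
        intro i _
        exact mul_nonneg (hpos i) (by linarith [hge i])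
      intro i
      have := (Finset.sum_eq_zero_iff_of_nonneg hnn).mp hcomp i (Finset.mem_univ i)
      exact this
    -- if x i = 1 then cnSum = 1, so neighbor sum = 0, so all neighbors 0
    have hnb : ∀ i, x i = 1 → ∀ j ∈ G.neighborFinset i, x j = 0 := by
      intro i hi j hj
      have h1 : cnSum G x i - 1 = 0 := by
        have := hterm i; rw [hi, one_mul] at this; exact this
      have h2 : ∑ j ∈ G.neighborFinset i, x j = 0 := by
        unfold cnSum at h1; rw [hi] at h1; linarith
      have := (Finset.sum_eq_zero_iff_of_nonneg (fun j _ => hpos j)).mp h2 j hj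
      exact this
    refine ⟨S, ⟨?_, ?_⟩, ?_⟩
    · intro i hi j hj hadj
      have hxj := hnb i ((hmemS i).mp hi) j (by simp [hadj])
      have := (hmemS j).mp hj
      linarith
    · intro T hT hST
      by_contra hne
      obtain ⟨t, htT, htS⟩ := Finset.exists_of_ssubset (hST.ssubset_of_ne (Ne.symm hne))
      have hxt : x t = 0 := by
        rcases hbin t with h | h
        · exact h
        · exact absurd ((hmemS t).mpr h) htS
      -- cnSum t ≥ 1 forces a neighbor with x = 1
      have h2 : 1 ≤ ∑ j ∈ G.neighborFinset t, x j := by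
        have := hge t; unfold cnSum at this; rw [hxt] at this; linarith
      have : ∃ j ∈ G.neighborFinset t, x j = 1 := by
        by_contra h
        push_neg at h
        have hz : ∀ j ∈ G.neighborFinset t, x j = 0 := by
          intro j hj
          rcases hbin j with h0 | h1
          · exact h0
          · exact absurd h1 (h j hj)
        have : ∑ j ∈ G.neighborFinset t, x j = 0 := Finset.sum_eq_zero hz
        linarith
      obtain ⟨j, hj, hxj⟩ := this
      have hjS : j ∈ S := (hmemS j).mpr hxj
      have hjT : j ∈ T := hST hjS
      exact hT t htT j hjT (by simpa using hj)
    · intro i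
      rcases hbin i with h | h
      · have hiS : i ∉ S := by simp [hmemS, h]
        rw [h, if_neg hiS]
      · rw [h, if_pos ((hmemS i).mpr h)]
  · rintro ⟨S, ⟨hind, hmax⟩, hx⟩
    have hpos : ∀ i, 0 ≤ x i := by
      intro i; rw [hx i]; split <;> norm_num
    have hcn : ∀ i ∈ S, cnSum G x i = 1 := by
      intro i hi
      unfold cnSum
      rw [hx i, if_pos hi]
      have : ∑ j ∈ G.neighborFinset i, x j = 0 := by
        apply Finset.sum_eq_zero
        intro j hj
        rw [hx j, if_neg]
        intro hjS
        exact hind i hi j hjS (by simpa using hj)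
      rw [this]; ring
    refine ⟨hpos, ?_, ?_⟩
    · intro i
      by_cases hi : i ∈ S
      · exact (hcn i hi).ge
      · -- maximality: some neighbor of i is in S
        have : ∃ j ∈ S, G.Adj i j := by
          by_contra h
          push_neg at h
          have hT : IsIndep G (insert i S) := by
            intro a ha b hb hadj
            rcases Finset.mem_insert.mp ha with ha' | ha' <;>
              rcases Finset.mem_insert.mp hb with hb' | hb'
            · subst ha'; subst hb'; exact G.loopless.irrefl _ hadj
            · subst ha'; exact h b hb' hadj
            · subst hb'; exact h a ha' hadj.symm
            · exact hind a ha' b hb' hadj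
          have := hmax _ hT (Finset.subset_insert i S)
          exact hi (this ▸ Finset.mem_insert_self i S)
        obtain ⟨j, hjS, hadj⟩ := this
        unfold cnSum
        rw [hx i, if_neg hi]
        have h1 : (1:ℝ) ≤ ∑ j ∈ G.neighborFinset i, x j := by
          have hjmem : j ∈ G.neighborFinset i := by simpa using hadj
          have := Finset.single_le_sum (f := x) (fun k _ => hpos k) hjmem
          rw [hx j, if_pos hjS] at this
          linarith
        linarith
    · apply Finset.sum_eq_zero
      intro i _
      by_cases hi : i ∈ S
      · rw [hcn i hi]; ring
      · rw [hx i, if_neg hi]; ring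
end

section
/- For any graph G, the minimum of 1ᵀx over all solutions x of LCP(G) is at most β(G), the minimum cardinality of a maximal independent set of G. -/
/-- The infimum of `1ᵀx` over solutions of LCP(G) is at most `β(G)`,
the minimum cardinality of a maximal independent set. -/
theorem stmt_2 {n : ℕ} (G : SimpleGraph (Fin n)) [DecidableRel G.Adj]
    (S : Finset (Fin n)) (hS : IsMaxIndep G S)
    (hSmin : ∀ T : Finset (Fin n), IsMaxIndep G T → S.card ≤ T.card) :
    sInf {v : ℝ | ∃ x, IsLCPSol G x ∧ v = ∑ i, x i} ≤ (S.card : ℝ) := by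
  set x : Fin n → ℝ := fun i => if i ∈ S then (1:ℝ) else 0 with hx
  have hx0 : ∀ i, 0 ≤ x i := by
    intro i; simp only [hx]; split <;> norm_num
  -- for i ∉ S, there is a neighbor in S
  have hnbr : ∀ i : Fin n, i ∉ S → ∃ j ∈ G.neighborFinset i, j ∈ S := by
    intro i hi
    by_contra hcon
    push_neg at hcon
    have hind : IsIndep G (insert i S) := by
      intro a ha b hb hab
      rcases Finset.mem_insert.1 ha with rfl | ha'
      · rcases Finset.mem_insert.1 hb with rfl | hb'
        · exact G.loopless.irrefl _ hab
        · exact hcon b (by simpa [SimpleGraph.mem_neighborFinset] using hab) hb'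
      · rcases Finset.mem_insert.1 hb with rfl | hb'
        · exact hcon a (by simpa [SimpleGraph.mem_neighborFinset] using hab.symm) ha'
        · exact hS.1 a ha' b hb' hab
    have := hS.2 (insert i S) hind (Finset.subset_insert i S)
    exact hi (this ▸ Finset.mem_insert_self i S)
  have hcn : ∀ i, 1 ≤ cnSum G x i := by
    intro i
    by_cases hi : i ∈ S
    · have : 0 ≤ ∑ j ∈ G.neighborFinset i, x j :=
        Finset.sum_nonneg fun j _ => hx0 j
      have : (1:ℝ) ≤ x i + ∑ j ∈ G.neighborFinset i, x j := by
        simp only [hx, if_pos hi]; linarith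
      simpa [cnSum] using this
    · obtain ⟨j, hjN, hjS⟩ := hnbr i hi
      have h1 : (1:ℝ) ≤ ∑ j ∈ G.neighborFinset i, x j := by
        have := Finset.single_le_sum (f := x) (fun k _ => hx0 k) hjN
        simpa [hx, if_pos hjS] using this
      have : (1:ℝ) ≤ x i + ∑ j ∈ G.neighborFinset i, x j := by
        have := hx0 i; linarith
      simpa [cnSum] using this
  have hcomp : (∑ i, x i * (cnSum G x i - 1)) = 0 := by
    apply Finset.sum_eq_zero
    intro i _
    by_cases hi : i ∈ S
    · have hzero : ∑ j ∈ G.neighborFinset i, x j = 0 := by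
        apply Finset.sum_eq_zero
        intro j hj
        have hadj : G.Adj i j := (SimpleGraph.mem_neighborFinset _ _ _).1 hj
        have : j ∉ S := fun hjS => hS.1 i hi j hjS hadj
        simp [hx, this]
      simp only [cnSum, hzero]; simp [hx, hi]
    · simp [hx, hi]
  have hmem : (S.card : ℝ) ∈ {v : ℝ | ∃ x, IsLCPSol G x ∧ v = ∑ i, x i} := by
    refine ⟨x, ⟨hx0, hcn, hcomp⟩, ?_⟩
    simp [hx, Finset.sum_ite_mem, Finset.univ_inter]
  have hbdd : BddBelow {v : ℝ | ∃ x, IsLCPSol G x ∧ v = ∑ i, x i} := by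
    refine ⟨0, ?_⟩
    rintro v ⟨y, hy, rfl⟩
    exact Finset.sum_nonneg fun i _ => hy.1 i
  exact csInf_le hbdd hmem
end

section
/- If G is a forest, then the minimum of 1ᵀx over all solutions x of LCP(G) equals β(G), the independent domination number, and the characteristic vector of a smallest maximal independent set is a minimizer. -/
open Finset SimpleGraph

set_option maxHeartbeats 1000000

namespace ForestAux


variable {V : Type*} [Fintype V] [DecidableEq V]

noncomputable def rootOf (G : SimpleGraph V) (v : V) : V := (G.connectedComponentMk v).out

lemma connectedComponentMk_out (G : SimpleGraph V) (c : G.ConnectedComponent) :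
    G.connectedComponentMk c.out = c := Quot.out_eq c

lemma rootOf_reachable (G : SimpleGraph V) (v : V) : G.Reachable v (rootOf G v) :=
  (SimpleGraph.ConnectedComponent.exact (connectedComponentMk_out G _)).symm

lemma rootOf_rootOf (G : SimpleGraph V) (v : V) : rootOf G (rootOf G v) = rootOf G v := by
  unfold rootOf
  rw [connectedComponentMk_out]

noncomputable def pth (G : SimpleGraph V) (v : V) : G.Path v (rootOf G v) :=
  (rootOf_reachable G v).some.toPath

lemma rootOf_eq_of_adj {G : SimpleGraph V} {a b : V} (h : G.Adj a b) :
    rootOf G a = rootOf G b := by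
  unfold rootOf
  rw [SimpleGraph.ConnectedComponent.sound h.reachable]

lemma exists_first_edge {G : SimpleGraph V} (hG : G.IsAcyclic) {a b : V} (hab : G.Adj a b) :
    ∃ x, x ∈ s(a, b) ∧ ((pth G x : G.Walk x (rootOf G x)).edges).head? = some s(a, b) := by
  classical
  by_cases hmem : a ∈ (pth G b : G.Walk b (rootOf G b)).support
  · -- path from b passes through a; path from b starts with edge b-a
    refine ⟨b, by simp, ?_⟩
    have htake : ((pth G b : G.Walk b (rootOf G b)).takeUntil a hmem)
        = (SimpleGraph.Path.singleton hab.symm : G.Walk b a) := by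
      have h1 : ((pth G b : G.Walk b (rootOf G b)).takeUntil a hmem).IsPath :=
        (pth G b).2.takeUntil hmem
      have := hG.path_unique ⟨_, h1⟩ (SimpleGraph.Path.singleton hab.symm)
      exact congrArg Subtype.val this
    have hspec := ((pth G b : G.Walk b (rootOf G b)).take_spec hmem)
    rw [htake] at hspec
    have : (pth G b : G.Walk b (rootOf G b))
        = Walk.cons hab.symm ((pth G b : G.Walk b (rootOf G b)).dropUntil a hmem) := by
      refine hspec.symm.trans ?_
      simp [SimpleGraph.Path.singleton]
    rw [this]
    simp [Sym2.eq_swap]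
  · -- path from a is edge a-b followed by path from b
    refine ⟨a, by simp, ?_⟩
    have hr : rootOf G b = rootOf G a := (rootOf_eq_of_adj hab).symm
    have hw : ((pth G a : G.Walk a (rootOf G a)))
        = Walk.cons hab ((pth G b : G.Walk b (rootOf G b)).copy rfl hr) := by
      have hp : (Walk.cons hab ((pth G b : G.Walk b (rootOf G b)).copy rfl hr)).IsPath := by
        apply Walk.IsPath.cons
        · simpa using (pth G b).2
        · simpa using hmem
      have := hG.path_unique (pth G a) ⟨_, hp⟩
      exact congrArg Subtype.val this
    rw [hw]
    simp

lemma support_edge_bound {G : SimpleGraph V} (hG : G.IsAcyclic)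
    (E' : Finset (Sym2 V)) (hE : ∀ e ∈ E', e ∈ G.edgeSet)
    (W : Finset V) (hW : ∀ e ∈ E', ∀ v, v ∈ e → v ∈ W) (hWne : W.Nonempty) :
    E'.card < W.card := by
  classical
  rcases E'.eq_empty_or_nonempty with rfl | hne
  · simpa using hWne.card_pos
  obtain ⟨e₀, he₀⟩ := hne
  set G' : SimpleGraph V := SimpleGraph.fromEdgeSet (E' : Set (Sym2 V)) with hG'def
  have hle : G' ≤ G := by
    intro a b hab
    rw [hG'def, fromEdgeSet_adj] at hab
    exact (G.mem_edgeSet).mp (hE _ hab.1)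
  have hG' : G'.IsAcyclic := fun v c hc => hG (c.mapLe hle) (hc.mapLe hle)
  have hadj : ∀ e ∈ E', ∀ a b : V, e = s(a, b) → G'.Adj a b := by
    intro e he a b heq
    rw [hG'def, fromEdgeSet_adj]
    refine ⟨by rw [← heq]; exact_mod_cast he, ?_⟩
    rintro rfl
    exact (G.irrefl) ((G.mem_edgeSet).mp (hE _ (heq ▸ he)))
  have key : ∀ e ∈ E', ∃ x, x ∈ e ∧
      ((pth G' x : G'.Walk x (rootOf G' x)).edges).head? = some e := by
    intro e he
    induction e with
    | _ a b => exact exists_first_edge hG' (hadj _ he a b rfl)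
  -- the distinguished root
  obtain ⟨x₁, hx₁e, _⟩ := key e₀ he₀
  set x₀ := rootOf G' x₁ with hx₀def
  have hx₀root : rootOf G' x₀ = x₀ := rootOf_rootOf G' x₁
  have hx₀none : ((pth G' x₀ : G'.Walk x₀ (rootOf G' x₀)).edges) = [] := by
    have hcopy : ((pth G' x₀ : G'.Walk x₀ (rootOf G' x₀)).copy rfl hx₀root).IsPath :=
      (Walk.isPath_copy _ _ _).mpr (pth G' x₀).2
    have hval : ((pth G' x₀ : G'.Walk x₀ (rootOf G' x₀)).copy rfl hx₀root) =
        (Walk.nil : G'.Walk x₀ x₀) :=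
      congrArg Subtype.val (SimpleGraph.Path.loop_eq (⟨_, hcopy⟩ : G'.Path x₀ x₀))
    have h2 := congrArg Walk.edges hval
    simpa using h2
  have hx₀W : x₀ ∈ W := by
    by_cases hxx : x₀ = x₁
    · exact hW _ he₀ _ (hxx ▸ hx₁e)
    · obtain ⟨y, hy, _, _⟩ := Walk.exists_eq_cons_of_ne hxx
        ((rootOf_reachable G' x₁).symm.some)
      have : s(x₀, y) ∈ G'.edgeSet := hy
      rw [hG'def, edgeSet_fromEdgeSet] at this
      exact hW _ (by exact_mod_cast this.1) _ (by simp)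
  -- injection from edges into W.erase x₀
  have hcard : E'.card ≤ (W.erase x₀).card := by
    set F : Sym2 V → V := fun e =>
      if h : ∃ x, x ∈ e ∧ ((pth G' x : G'.Walk x (rootOf G' x)).edges).head? = some e
      then h.choose else x₀ with hFdef
    have hFspec : ∀ e ∈ E', F e ∈ e ∧
        ((pth G' (F e) : G'.Walk (F e) (rootOf G' (F e))).edges).head? = some e := by
      intro e he
      have h := key e he
      have hFe : F e = h.choose := by rw [hFdef]; exact dif_pos h
      rw [hFe]
      exact h.choose_spec
    apply Finset.card_le_card_of_injOn F
    · intro e he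
      rw [Finset.mem_coe, Finset.mem_erase]
      constructor
      · intro hFx
        have := (hFspec e he).2
        rw [hFx, hx₀none] at this
        simp at this
      · exact hW _ he _ (hFspec e he).1
    · intro e₁ h₁ e₂ h₂ heq
      have := (hFspec e₁ h₁).2
      rw [heq, (hFspec e₂ h₂).2] at this
      exact (Option.some_injective _ this).symm
  calc E'.card ≤ (W.erase x₀).card := hcard
    _ < W.card := Finset.card_erase_lt_of_mem hx₀W


end ForestAux

open ForestAux

theorem lcp_lower {n : ℕ} (G : SimpleGraph (Fin n)) [DecidableRel G.Adj] (hG : G.IsAcyclic)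
    (x : Fin n → ℝ) (hx : IsLCPSol G x) :
    ∃ T : Finset (Fin n), IsMaxIndep G T ∧ (T.card : ℝ) ≤ ∑ i, x i := by
  classical
  obtain ⟨hx0, hx1, hxc⟩ := hx
  set P : Finset (Fin n) := univ.filter (fun i => 0 < x i) with hPdef
  have hPmem : ∀ i, i ∈ P ↔ 0 < x i := by intro i; simp [hPdef]
  have hxzero : ∀ i, i ∉ P → x i = 0 := by
    intro i hi
    have : ¬ 0 < x i := fun h => hi ((hPmem i).mpr h)
    exact le_antisymm (not_lt.mp this) (hx0 i)
  have heqP : ∀ i ∈ P, cnSum G x i = 1 := by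
    intro i hi
    have hterm : ∀ j ∈ (univ : Finset (Fin n)), 0 ≤ x j * (cnSum G x j - 1) :=
      fun j _ => mul_nonneg (hx0 j) (by linarith [hx1 j])
    have h0 := (Finset.sum_eq_zero_iff_of_nonneg hterm).mp hxc i (mem_univ i)
    have hxi : 0 < x i := (hPmem i).mp hi
    rcases mul_eq_zero.mp h0 with h | h
    · exact absurd h (ne_of_gt hxi)
    · linarith
  set d : Fin n → Finset (Fin n) := fun i => G.neighborFinset i ∩ P with hddef
  have hcn : ∀ i, cnSum G x i = x i + ∑ j ∈ d i, x j := by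
    intro i
    unfold cnSum
    congr 1
    refine (Finset.sum_subset Finset.inter_subset_left ?_).symm
    intro j hj hj'
    exact hxzero j (fun hjP => hj' (Finset.mem_inter.mpr ⟨hj, hjP⟩))
  have hkey : ∀ i ∈ P, x i + ∑ j ∈ d i, x j = 1 := by
    intro i hi; rw [← hcn i]; exact heqP i hi
  have hdP : ∀ i, d i ⊆ P := fun i => Finset.inter_subset_right
  have hdadj : ∀ i j, j ∈ d i → G.Adj i j := by
    intro i j hj
    exact (G.mem_neighborFinset i j).mp (Finset.mem_inter.mp hj).1
  have hdsymm : ∀ i j, j ∈ d i → i ∈ P → i ∈ d j := by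
    intro i j hj hiP
    exact Finset.mem_inter.mpr ⟨(G.mem_neighborFinset j i).mpr (hdadj i j hj).symm, hiP⟩
  -- every vertex of P has at most one P-neighbour
  have hdegP : ∀ i ∈ P, (d i).card ≤ 1 := by
    by_contra hcon
    push_neg at hcon
    obtain ⟨i₀, hi₀P, hi₀2⟩ := hcon
    set Q : Finset (Fin n) := P.filter (fun i => 2 ≤ (d i).card) with hQdef
    have hQP : Q ⊆ P := Finset.filter_subset _ _
    have hQmem : ∀ i, i ∈ Q ↔ i ∈ P ∧ 2 ≤ (d i).card := by intro i; simp [hQdef]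
    have hQne : Q.Nonempty := ⟨i₀, (hQmem i₀).mpr ⟨hi₀P, by omega⟩⟩
    have hstep : ∀ i ∈ Q, ∀ j ∈ d i, j ∈ Q := by
      intro i hi j hj
      obtain ⟨hiP, hi2⟩ := (hQmem i).mp hi
      have hjP : j ∈ P := hdP i hj
      refine (hQmem j).mpr ⟨hjP, ?_⟩
      by_contra hj2
      push_neg at hj2
      have hjle : (d j).card ≤ 1 := by omega
      have hidj : i ∈ d j := hdsymm i j hj hiP
      have hdj : d j = {i} := by
        apply Finset.eq_singleton_iff_unique_mem.mpr
        exact ⟨hidj, fun k hk => Finset.card_le_one.mp hjle k hk i hidj⟩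
      have hkeyj : x j + x i = 1 := by
        have := hkey j hjP
        rwa [hdj, Finset.sum_singleton] at this
      obtain ⟨k, hk, hkj⟩ := Finset.exists_mem_ne (s := d i) (by omega) j
      have hsub : ({j, k} : Finset (Fin n)) ⊆ d i := by
        intro a ha
        rcases Finset.mem_insert.mp ha with rfl | ha
        · exact hj
        · rwa [Finset.mem_singleton.mp ha]
      have hsum : x j + x k ≤ ∑ a ∈ d i, x a := by
        have := Finset.sum_le_sum_of_subset_of_nonneg hsub
          (fun a ha _ => (hx0 a))
        rwa [Finset.sum_pair (Ne.symm hkj)] at this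
      have hxk : 0 < x k := (hPmem k).mp (hdP i hk)
      have := hkey i hiP
      have hxipos : 0 < x i := (hPmem i).mp hiP
      have hxjpos : 0 < x j := (hPmem j).mp hjP
      linarith
    have hQ2 : ∀ i ∈ Q, 2 ≤ (G.neighborFinset i ∩ Q).card := by
      intro i hi
      have hsub : d i ⊆ G.neighborFinset i ∩ Q := by
        intro j hj
        exact Finset.mem_inter.mpr ⟨(Finset.mem_inter.mp hj).1, hstep i hi j hj⟩
      exact le_trans ((hQmem i).mp hi).2 (Finset.card_le_card hsub)
    set blk : Fin n → Finset (Sym2 (Fin n)) :=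
      fun i => (G.neighborFinset i ∩ Q).image (fun j => s(i, j)) with hblkdef
    set E' : Finset (Sym2 (Fin n)) := Q.biUnion blk with hE'def
    have hE'sub : ∀ e ∈ E', e ∈ G.edgeSet := by
      intro e he
      obtain ⟨i, _, he⟩ := Finset.mem_biUnion.mp he
      obtain ⟨j, hj, rfl⟩ := Finset.mem_image.mp he
      exact (G.mem_edgeSet).mpr ((G.mem_neighborFinset i j).mp (Finset.mem_inter.mp hj).1)
    have hE'W : ∀ e ∈ E', ∀ v, v ∈ e → v ∈ Q := by
      intro e he v hv
      obtain ⟨i, hi, he⟩ := Finset.mem_biUnion.mp he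
      obtain ⟨j, hj, rfl⟩ := Finset.mem_image.mp he
      rcases Sym2.mem_iff.mp hv with rfl | rfl
      · exact hi
      · exact (Finset.mem_inter.mp hj).2
    have hblcard : ∀ i, (blk i).card = (G.neighborFinset i ∩ Q).card := by
      intro i
      apply Finset.card_image_of_injOn
      intro a ha b hb hab
      exact Sym2.congr_right.mp hab
    have hdouble : ∑ i ∈ Q, (blk i).card ≤ 2 * E'.card := by
      have hfil : ∀ i ∈ Q, blk i = E'.filter (fun e => e ∈ blk i) := by
        intro i hi
        rw [Finset.filter_mem_eq_inter]
        exact (Finset.inter_eq_right.mpr (Finset.subset_biUnion_of_mem blk hi)).symm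
      calc ∑ i ∈ Q, (blk i).card
          = ∑ i ∈ Q, (E'.filter (fun e => e ∈ blk i)).card := by
            apply Finset.sum_congr rfl; intro i hi; rw [← hfil i hi]
        _ = ∑ i ∈ Q, ∑ e ∈ E', if e ∈ blk i then 1 else 0 := by
            apply Finset.sum_congr rfl; intro i _; rw [Finset.card_filter]
        _ = ∑ e ∈ E', ∑ i ∈ Q, if e ∈ blk i then 1 else 0 := Finset.sum_comm
        _ = ∑ e ∈ E', (Q.filter (fun i => e ∈ blk i)).card := by
            apply Finset.sum_congr rfl; intro e _; rw [Finset.card_filter]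
        _ ≤ ∑ e ∈ E', 2 := by
            apply Finset.sum_le_sum
            intro e he
            induction e with
            | _ a b =>
              have hsub : Q.filter (fun i => s(a,b) ∈ blk i) ⊆ {a, b} := by
                intro i hi
                obtain ⟨-, hblk⟩ := Finset.mem_filter.mp hi
                obtain ⟨j, -, hj⟩ := Finset.mem_image.mp hblk
                have : i ∈ s(a, b) := by rw [← hj]; simp
                rcases Sym2.mem_iff.mp this with rfl | rfl
                · exact Finset.mem_insert_self _ _
                · exact Finset.mem_insert_of_mem (Finset.mem_singleton_self _)
              calc (Q.filter (fun i => s(a,b) ∈ blk i)).card ≤ ({a, b} : Finset (Fin n)).card :=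
                    Finset.card_le_card hsub
                _ ≤ 2 := Finset.card_insert_le _ _ |>.trans (by simp)
        _ = 2 * E'.card := by rw [Finset.sum_const, smul_eq_mul, mul_comm]
    have hlow : 2 * Q.card ≤ ∑ i ∈ Q, (blk i).card := by
      calc 2 * Q.card = ∑ _i ∈ Q, 2 := by rw [Finset.sum_const, smul_eq_mul, mul_comm]
        _ ≤ ∑ i ∈ Q, (blk i).card := by
            apply Finset.sum_le_sum
            intro i hi
            rw [hblcard i]
            exact hQ2 i hi
    have hQE : Q.card ≤ E'.card := by omega
    have := support_edge_bound hG E' hE'sub Q hE'W hQne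
    omega
  -- split P into singletons and pair vertices
  set P₁ : Finset (Fin n) := P.filter (fun i => d i = ∅) with hP₁def
  set P₂ : Finset (Fin n) := P.filter (fun i => ¬ d i = ∅) with hP₂def
  have hP₁P : P₁ ⊆ P := Finset.filter_subset _ _
  have hP₂P : P₂ ⊆ P := Finset.filter_subset _ _
  have hP12 : P₁ ∪ P₂ = P := Finset.filter_union_filter_not_eq _ P
  have hPdisj : Disjoint P₁ P₂ := Finset.disjoint_filter_filter_not P P _
  have hxP₁ : ∀ i ∈ P₁, x i = 1 := by
    intro i hi
    obtain ⟨hiP, hde⟩ := Finset.mem_filter.mp hi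
    have := hkey i hiP
    rw [hde] at this
    simpa using this
  set m : Fin n → Fin n := fun i => if h : (d i).Nonempty then h.choose else i with hmdef
  have hm_mem : ∀ i ∈ P₂, m i ∈ d i := by
    intro i hi
    obtain ⟨hiP, hde⟩ := Finset.mem_filter.mp hi
    have hne : (d i).Nonempty := Finset.nonempty_iff_ne_empty.mpr hde
    have : m i = hne.choose := by rw [hmdef]; exact dif_pos hne
    rw [this]
    exact hne.choose_spec
  have hd_eq : ∀ i ∈ P₂, d i = {m i} := by
    intro i hi
    have hiP : i ∈ P := hP₂P hi
    apply Finset.eq_singleton_iff_unique_mem.mpr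
    exact ⟨hm_mem i hi, fun k hk => Finset.card_le_one.mp (hdegP i hiP) k hk (m i) (hm_mem i hi)⟩
  have hadjm : ∀ i ∈ P₂, G.Adj i (m i) := fun i hi => hdadj i (m i) (hm_mem i hi)
  have hxm : ∀ i ∈ P₂, x i + x (m i) = 1 := by
    intro i hi
    have := hkey i (hP₂P hi)
    rwa [hd_eq i hi, Finset.sum_singleton] at this
  have hmP₂ : ∀ i ∈ P₂, m i ∈ P₂ := by
    intro i hi
    have hmiP : m i ∈ P := hdP i (hm_mem i hi)
    have : i ∈ d (m i) := hdsymm i (m i) (hm_mem i hi) (hP₂P hi)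
    refine Finset.mem_filter.mpr ⟨hmiP, ?_⟩
    intro he
    rw [he] at this
    exact absurd this (Finset.notMem_empty i)
  have hmm : ∀ i ∈ P₂, m (m i) = i := by
    intro i hi
    have h1 : i ∈ d (m i) := hdsymm i (m i) (hm_mem i hi) (hP₂P hi)
    rw [hd_eq (m i) (hmP₂ i hi)] at h1
    exact (Finset.mem_singleton.mp h1).symm
  have hxP₂lt : ∀ i ∈ P₂, x i < 1 := by
    intro i hi
    have h1 := hxm i hi
    have h2 : 0 < x (m i) := (hPmem _).mp (hP₂P (hmP₂ i hi))
    linarith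
  set M : Finset (Fin n) := P₂.filter (fun i => i < m i) with hMdef
  have hMP₂ : M ⊆ P₂ := Finset.filter_subset _ _
  have hMlt : ∀ ρ ∈ M, ρ < m ρ := fun ρ hρ => (Finset.mem_filter.mp hρ).2
  set rep : Fin n → Fin n := fun j => min j (m j) with hrepdef
  have hrepM : ∀ j ∈ P₂, rep j ∈ M := by
    intro j hj
    rcases lt_or_gt_of_ne (hadjm j hj).ne with h | h
    · have hr : rep j = j := min_eq_left h.le
      rw [hr]
      exact Finset.mem_filter.mpr ⟨hj, h⟩
    · have hr : rep j = m j := min_eq_right h.le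
      rw [hr]
      refine Finset.mem_filter.mpr ⟨hmP₂ j hj, ?_⟩
      rw [hmm j hj]
      exact h
  have hrep_pair : ∀ j ∈ P₂, j = rep j ∨ j = m (rep j) := by
    intro j hj
    rcases min_choice j (m j) with h | h
    · left; exact h.symm
    · right
      have hr : rep j = m j := h
      rw [hr, hmm j hj]
  have hrep_m : ∀ j ∈ P₂, rep (m j) = rep j := by
    intro j hj
    show min (m j) (m (m j)) = min j (m j)
    rw [hmm j hj, min_comm]
  have hminj : ∀ a ∈ M, ∀ b ∈ M, m a = m b → a = b := by
    intro a ha b hb hab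
    have := hmm a (hMP₂ ha)
    rw [hab, hmm b (hMP₂ hb)] at this
    exact this.symm
  have hMsplit : M ∪ M.image m = P₂ := by
    apply Finset.Subset.antisymm
    · intro j hj
      rcases Finset.mem_union.mp hj with h | h
      · exact hMP₂ h
      · obtain ⟨σ, hσ, rfl⟩ := Finset.mem_image.mp h
        exact hmP₂ σ (hMP₂ hσ)
    · intro j hj
      rcases lt_or_gt_of_ne (hadjm j hj).ne with h | h
      · exact Finset.mem_union_left _ (Finset.mem_filter.mpr ⟨hj, h⟩)
      · apply Finset.mem_union_right
        have hmjM : m j ∈ M := by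
          refine Finset.mem_filter.mpr ⟨hmP₂ j hj, ?_⟩
          rw [hmm j hj]; exact h
        exact Finset.mem_image.mpr ⟨m j, hmjM, hmm j hj⟩
  have hMdisj : Disjoint M (M.image m) := by
    rw [Finset.disjoint_left]
    intro j hjM hjI
    obtain ⟨σ, hσ, hjm⟩ := Finset.mem_image.mp hjI
    have h1 : σ < m σ := hMlt σ hσ
    have h2 : j < m j := hMlt j hjM
    have h3 : m j = σ := by rw [← hjm, hmm σ (hMP₂ hσ)]
    rw [h3] at h2
    rw [hjm] at h1
    exact lt_asymm h1 h2
  have hsum : ∑ i, x i = (P₁.card : ℝ) + (M.card : ℝ) := by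
    have h1 : ∑ i, x i = ∑ i ∈ P, x i :=
      (Finset.sum_subset (Finset.subset_univ P) (fun i _ hi => hxzero i hi)).symm
    have h2 : ∑ i ∈ P, x i = ∑ i ∈ P₁, x i + ∑ i ∈ P₂, x i := by
      rw [← hP12, Finset.sum_union hPdisj]
    have h3 : ∑ i ∈ P₁, x i = (P₁.card : ℝ) := by
      rw [Finset.sum_congr rfl (fun i hi => hxP₁ i hi)]
      simp
    have h4 : ∑ i ∈ P₂, x i = (M.card : ℝ) := by
      rw [← hMsplit, Finset.sum_union hMdisj, Finset.sum_image hminj,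
        ← Finset.sum_add_distrib, Finset.sum_congr rfl (fun ρ hρ => hxm ρ (hMP₂ hρ))]
      simp
    rw [h1, h2, h3, h4]
  -- the set of uncovered zero-vertices
  set U : Finset (Fin n) := (univ \ P).filter (fun u => G.neighborFinset u ∩ P₁ = ∅) with hUdef
  have hUP : ∀ u ∈ U, u ∉ P := by
    intro u hu
    exact (Finset.mem_sdiff.mp (Finset.mem_filter.mp hu).1).2
  have hUsum : ∀ u ∈ U, 1 ≤ ∑ j ∈ G.neighborFinset u ∩ P₂, x j := by
    intro u hu
    have hxu : x u = 0 := hxzero u (hUP u hu)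
    have hcnu := hx1 u
    rw [hcn u, hxu, zero_add] at hcnu
    have hdu : d u = G.neighborFinset u ∩ P₂ := by
      have : d u = (G.neighborFinset u ∩ P₁) ∪ (G.neighborFinset u ∩ P₂) := by
        rw [hddef]
        dsimp only
        rw [← Finset.inter_union_distrib_left, hP12]
      rw [this, (Finset.mem_filter.mp hu).2, Finset.empty_union]
    rwa [hdu] at hcnu
  have hU2 : ∀ u ∈ U, 2 ≤ (G.neighborFinset u ∩ P₂).card := by
    intro u hu
    by_contra hle
    push_neg at hle
    have hle1 : (G.neighborFinset u ∩ P₂).card ≤ 1 := by omega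
    rcases (G.neighborFinset u ∩ P₂).eq_empty_or_nonempty with he | ⟨a, ha⟩
    · have := hUsum u hu
      rw [he] at this
      simp only [Finset.sum_empty] at this
      linarith
    · have hsub : G.neighborFinset u ∩ P₂ ⊆ {a} := by
        intro k hk
        exact Finset.mem_singleton.mpr (Finset.card_le_one.mp hle1 k hk a ha)
      have haP₂ : a ∈ P₂ := (Finset.mem_inter.mp ha).2
      have hs : ∑ j ∈ G.neighborFinset u ∩ P₂, x j ≤ x a := by
        have := Finset.sum_le_sum_of_subset_of_nonneg hsub (fun k _ _ => hx0 k)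
        rwa [Finset.sum_singleton] at this
      have := hUsum u hu
      have := hxP₂lt a haP₂
      linarith
  -- Hall's condition
  set N : Fin n → Finset (Fin n) := fun u => (G.neighborFinset u ∩ P₂).image rep with hNdef
  have hNM : ∀ u, N u ⊆ M := by
    intro u ρ hρ
    obtain ⟨j, hj, rfl⟩ := Finset.mem_image.mp hρ
    exact hrepM j (Finset.mem_inter.mp hj).2
  set N' : Fin n → Finset (Fin n) := fun u => if u ∈ U then N u else univ with hN'def
  have hHall : ∀ s : Finset (Fin n), s.card ≤ (s.biUnion N').card := by
    intro s
    by_cases hsU : s ⊆ U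
    case neg =>
      obtain ⟨u, hus, huU⟩ := Finset.not_subset.mp hsU
      have : (univ : Finset (Fin n)) ⊆ s.biUnion N' := by
        intro v _
        apply Finset.mem_biUnion.mpr ⟨u, hus, ?_⟩
        rw [hN'def]
        dsimp only
        rw [if_neg huU]
        exact Finset.mem_univ v
      calc s.card ≤ (univ : Finset (Fin n)).card := Finset.card_le_card (Finset.subset_univ s)
        _ ≤ (s.biUnion N').card := Finset.card_le_card this
    case pos =>
    rcases s.eq_empty_or_nonempty with rfl | hsne
    · simp
    have hNeq : ∀ a ∈ s, N' a = N a := by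
      intro a ha
      rw [hN'def]
      dsimp only
      rw [if_pos (hsU ha)]
    set B : Finset (Fin n) := s.biUnion N' with hBdef
    have hBM : B ⊆ M := by
      intro b hb
      obtain ⟨u, hu, hbN⟩ := Finset.mem_biUnion.mp hb
      rw [hNeq u hu] at hbN
      exact hNM _ hbN
    have hNB : ∀ a ∈ s, N a ⊆ B := by
      intro a ha
      rw [hBdef, ← hNeq a ha]
      exact Finset.subset_biUnion_of_mem N' ha
    set eblk : Fin n → Finset (Sym2 (Fin n)) :=
      fun u => (G.neighborFinset u ∩ P₂).image (fun j => s(u, j)) with heblkdef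
    set E1 : Finset (Sym2 (Fin n)) := s.biUnion eblk with hE1def
    set E2 : Finset (Sym2 (Fin n)) := B.image (fun ρ => s(ρ, m ρ)) with hE2def
    have huP : ∀ u ∈ s, u ∉ P := fun u hu => hUP u (hsU hu)
    have hE1card : 2 * s.card ≤ E1.card := by
      have hdisjblk : ∀ u ∈ s, ∀ u' ∈ s, u ≠ u' → Disjoint (eblk u) (eblk u') := by
        intro u hu u' hu' hne
        rw [Finset.disjoint_left]
        intro e he he'
        obtain ⟨j, hj, hej⟩ := Finset.mem_image.mp he
        obtain ⟨j', hj', hej'⟩ := Finset.mem_image.mp he'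
        rw [← hej'] at hej
        rcases Sym2.eq_iff.mp hej with ⟨h1, _⟩ | ⟨h1, h2⟩
        · exact hne h1
        · apply huP u' hu'
          rw [← h2]
          exact hP₂P (Finset.mem_inter.mp hj).2
      rw [hE1def, Finset.card_biUnion hdisjblk]
      have hbig : ∀ u ∈ s, 2 ≤ (eblk u).card := by
        intro u hu
        have hinj : Set.InjOn (fun j => s(u, j)) (↑(G.neighborFinset u ∩ P₂) : Set (Fin n)) := by
          intro a _ b _ hab
          exact Sym2.congr_right.mp hab
        rw [heblkdef]
        dsimp only
        rw [Finset.card_image_of_injOn hinj]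
        exact hU2 u (hsU hu)
      calc 2 * s.card = ∑ _u ∈ s, 2 := by rw [Finset.sum_const, smul_eq_mul, mul_comm]
        _ ≤ ∑ u ∈ s, (eblk u).card := Finset.sum_le_sum hbig
    have hE2card : E2.card = B.card := by
      rw [hE2def]
      apply Finset.card_image_of_injOn
      intro ρ hρ ρ' hρ' hee
      rcases Sym2.eq_iff.mp hee with ⟨h1, _⟩ | ⟨h1, h2⟩
      · exact h1
      · exfalso
        have l1 : ρ < m ρ := hMlt ρ (hBM hρ)
        have l2 : ρ' < m ρ' := hMlt ρ' (hBM hρ')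
        rw [h2] at l1
        rw [← h1] at l2
        exact lt_asymm l1 l2
    have hdisjE : Disjoint E1 E2 := by
      rw [Finset.disjoint_left]
      intro e he1 he2
      obtain ⟨u, hu, heu⟩ := Finset.mem_biUnion.mp he1
      obtain ⟨j, hj, hej⟩ := Finset.mem_image.mp heu
      obtain ⟨ρ, hρ, heρ⟩ := Finset.mem_image.mp he2
      rw [← hej] at heρ
      rcases Sym2.eq_iff.mp heρ with ⟨h1, _⟩ | ⟨_, h2⟩
      · exact huP u hu (by rw [← h1]; exact hP₂P (hMP₂ (hBM hρ)))
      · exact huP u hu (by rw [← h2]; exact hP₂P (hmP₂ ρ (hMP₂ (hBM hρ))))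
    set W : Finset (Fin n) := s ∪ B ∪ B.image m with hWdef
    have hWcard : W.card ≤ s.card + B.card + B.card := by
      have h1 : W.card ≤ (s ∪ B).card + (B.image m).card := Finset.card_union_le _ _
      have h2 : (s ∪ B).card ≤ s.card + B.card := Finset.card_union_le _ _
      have h3 : (B.image m).card ≤ B.card := Finset.card_image_le
      omega
    have hEG : ∀ e ∈ E1 ∪ E2, e ∈ G.edgeSet := by
      intro e he
      rcases Finset.mem_union.mp he with he | he
      · obtain ⟨u, hu, heu⟩ := Finset.mem_biUnion.mp he
        obtain ⟨j, hj, hej⟩ := Finset.mem_image.mp heu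
        rw [← hej]
        exact (G.mem_edgeSet).mpr ((G.mem_neighborFinset u j).mp (Finset.mem_inter.mp hj).1)
      · obtain ⟨ρ, hρ, heρ⟩ := Finset.mem_image.mp he
        rw [← heρ]
        exact (G.mem_edgeSet).mpr (hadjm ρ (hMP₂ (hBM hρ)))
    have hEW : ∀ e ∈ E1 ∪ E2, ∀ v, v ∈ e → v ∈ W := by
      intro e he v hv
      rcases Finset.mem_union.mp he with he | he
      · obtain ⟨u, hu, heu⟩ := Finset.mem_biUnion.mp he
        obtain ⟨j, hj, hej⟩ := Finset.mem_image.mp heu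
        rw [← hej] at hv
        have hjP₂ : j ∈ P₂ := (Finset.mem_inter.mp hj).2
        have hjB : j ∈ B ∪ B.image m := by
          have hrepB : rep j ∈ B := hNB u hu (Finset.mem_image.mpr ⟨j, hj, rfl⟩)
          rcases hrep_pair j hjP₂ with hh | hh
          · exact Finset.mem_union_left _ (by rw [hh]; exact hrepB)
          · exact Finset.mem_union_right _ (Finset.mem_image.mpr ⟨rep j, hrepB, hh.symm⟩)
        rcases Sym2.mem_iff.mp hv with rfl | rfl
        · exact Finset.mem_union_left _ (Finset.mem_union_left _ hu)
        · rw [hWdef, Finset.union_assoc]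
          exact Finset.mem_union_right _ hjB
      · obtain ⟨ρ, hρ, heρ⟩ := Finset.mem_image.mp he
        rw [← heρ] at hv
        rcases Sym2.mem_iff.mp hv with rfl | rfl
        · exact Finset.mem_union_left _ (Finset.mem_union_right _ hρ)
        · exact Finset.mem_union_right _ (Finset.mem_image.mpr ⟨ρ, hρ, rfl⟩)
    have hWne : W.Nonempty := by
      obtain ⟨a, ha⟩ := hsne
      exact ⟨a, Finset.mem_union_left _ (Finset.mem_union_left _ ha)⟩
    have hEcard : (E1 ∪ E2).card = E1.card + E2.card := Finset.card_union_of_disjoint hdisjE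
    have hbound := support_edge_bound hG (E1 ∪ E2) hEG W hEW hWne
    rw [hEcard, hE2card] at hbound
    omega
  obtain ⟨f, hfinj, hfmem⟩ := (Finset.all_card_le_biUnion_card_iff_exists_injective N').mp hHall
  have hfU : ∀ u ∈ U, f u ∈ N u := by
    intro u hu
    have h := hfmem u
    rw [hN'def] at h
    dsimp only at h
    rwa [if_pos hu] at h
  set chosen : Fin n → Fin n := fun ρ =>
    if _h : ∃ u, u ∈ U ∧ f u = ρ ∧ G.Adj u (m ρ) then m ρ else ρ with hchdef
  have hch_or : ∀ ρ, chosen ρ = ρ ∨ chosen ρ = m ρ := by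
    intro ρ
    rw [hchdef]
    dsimp only
    by_cases h : ∃ u, u ∈ U ∧ f u = ρ ∧ G.Adj u (m ρ)
    · right; rw [dif_pos h]
    · left; rw [dif_neg h]
  have hch_adj : ∀ u ∈ U, G.Adj u (chosen (f u)) := by
    intro u hu
    obtain ⟨j, hj, hjrep⟩ := Finset.mem_image.mp (hfU u hu)
    have hjP₂ : j ∈ P₂ := (Finset.mem_inter.mp hj).2
    have hadjuj : G.Adj u j := (G.mem_neighborFinset u j).mp (Finset.mem_inter.mp hj).1
    rw [hchdef]
    dsimp only
    by_cases h : ∃ u', u' ∈ U ∧ f u' = f u ∧ G.Adj u' (m (f u))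
    · rw [dif_pos h]
      obtain ⟨u', _, hu'f, hu'adj⟩ := h
      rwa [hfinj hu'f] at hu'adj
    · rw [dif_neg h]
      rcases hrep_pair j hjP₂ with hh | hh
      · rw [← hjrep, ← hh]
        exact hadjuj
      · exfalso
        apply h
        refine ⟨u, hu, rfl, ?_⟩
        rw [← hjrep, ← hh]
        exact hadjuj
  set T : Finset (Fin n) := P₁ ∪ M.image chosen with hTdef
  have hchP₂ : ∀ ρ ∈ M, chosen ρ ∈ P₂ := by
    intro ρ hρ
    rcases hch_or ρ with h | h
    · rw [h]; exact hMP₂ hρ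
    · rw [h]; exact hmP₂ ρ (hMP₂ hρ)
  have hTP : T ⊆ P := by
    intro t ht
    rcases Finset.mem_union.mp ht with h | h
    · exact hP₁P h
    · obtain ⟨ρ, hρ, rfl⟩ := Finset.mem_image.mp h
      exact hP₂P (hchP₂ ρ hρ)
  have hrep_of : ∀ ρ ∈ M, rep (chosen ρ) = ρ := by
    intro ρ hρ
    have hρP₂ := hMP₂ hρ
    have hrepρ : rep ρ = ρ := min_eq_left (hMlt ρ hρ).le
    rcases hch_or ρ with h | h
    · rw [h, hrepρ]
    · rw [h, hrep_m ρ hρP₂, hrepρ]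
  have hTindep : IsIndep G T := by
    intro a ha b hb hab
    have hbP : b ∈ P := hTP hb
    have hbda : b ∈ d a := Finset.mem_inter.mpr ⟨(G.mem_neighborFinset a b).mpr hab, hbP⟩
    have haP : a ∈ P := hTP ha
    have hadb : a ∈ d b := hdsymm a b hbda haP
    have haIm : ∃ ρ ∈ M, chosen ρ = a := by
      rcases Finset.mem_union.mp ha with h | h
      · exfalso
        have hda : d a = ∅ := (Finset.mem_filter.mp h).2
        rw [hda] at hbda
        exact Finset.notMem_empty b hbda
      · obtain ⟨ρ, hρ, hc⟩ := Finset.mem_image.mp h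
        exact ⟨ρ, hρ, hc⟩
    have hbIm : ∃ ρ ∈ M, chosen ρ = b := by
      rcases Finset.mem_union.mp hb with h | h
      · exfalso
        have hdb : d b = ∅ := (Finset.mem_filter.mp h).2
        rw [hdb] at hadb
        exact Finset.notMem_empty a hadb
      · obtain ⟨ρ, hρ, hc⟩ := Finset.mem_image.mp h
        exact ⟨ρ, hρ, hc⟩
    obtain ⟨ρa, hρa, hae⟩ := haIm
    obtain ⟨ρb, hρb, hbe⟩ := hbIm
    have haP₂ : a ∈ P₂ := hae ▸ hchP₂ ρa hρa
    have hba : b = m a := by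
      have h1 : d a = {m a} := hd_eq a haP₂
      rw [h1] at hbda
      exact Finset.mem_singleton.mp hbda
    have e1 : rep a = ρa := by rw [← hae]; exact hrep_of ρa hρa
    have e2 : rep b = ρb := by rw [← hbe]; exact hrep_of ρb hρb
    have e3 : rep b = rep a := by rw [hba, hrep_m a haP₂]
    have : ρa = ρb := by rw [← e1, ← e3, e2]
    rw [← hae, ← hbe, ← this] at hab
    exact G.irrefl hab
  have hTdom : ∀ v, v ∈ T ∨ ∃ w ∈ T, G.Adj v w := by
    intro v
    by_cases hvP : v ∈ P
    · rw [← hP12] at hvP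
      rcases Finset.mem_union.mp hvP with hv1 | hv2
      · left
        exact Finset.mem_union_left _ hv1
      · have hρ : rep v ∈ M := hrepM v hv2
        have hcT : chosen (rep v) ∈ T :=
          Finset.mem_union_right _ (Finset.mem_image.mpr ⟨rep v, hρ, rfl⟩)
        rcases hrep_pair v hv2 with hh | hh
        · rcases hch_or (rep v) with hc | hc
          · left
            rw [hc, ← hh] at hcT
            exact hcT
          · right
            refine ⟨chosen (rep v), hcT, ?_⟩
            rw [hc, ← hh]
            exact hadjm v hv2
        · rcases hch_or (rep v) with hc | hc
          · right
            refine ⟨chosen (rep v), hcT, ?_⟩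
            rw [hc]
            nth_rewrite 1 [hh]
            exact (hadjm (rep v) (hMP₂ hρ)).symm
          · left
            rw [hc, ← hh] at hcT
            exact hcT
    · by_cases hnb : (G.neighborFinset v ∩ P₁).Nonempty
      · obtain ⟨w, hw⟩ := hnb
        right
        exact ⟨w, Finset.mem_union_left _ (Finset.mem_inter.mp hw).2,
          (G.mem_neighborFinset v w).mp (Finset.mem_inter.mp hw).1⟩
      · have hvU : v ∈ U := by
          rw [hUdef]
          refine Finset.mem_filter.mpr ⟨Finset.mem_sdiff.mpr ⟨Finset.mem_univ v, hvP⟩, ?_⟩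
          exact Finset.not_nonempty_iff_eq_empty.mp hnb
        right
        have hfvM : f v ∈ M := hNM v (hfU v hvU)
        exact ⟨chosen (f v), Finset.mem_union_right _ (Finset.mem_image.mpr ⟨f v, hfvM, rfl⟩),
          hch_adj v hvU⟩
  refine ⟨T, ⟨hTindep, ?_⟩, ?_⟩
  · intro T' hT' hsub
    apply Finset.Subset.antisymm _ hsub
    intro t ht
    by_contra htT
    rcases hTdom t with h | ⟨w, hwT, hadj2⟩
    · exact htT h
    · exact hT' t ht w (hsub hwT) hadj2
  · rw [hsum]
    have h1 : T.card ≤ P₁.card + M.card := by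
      have h2 : T.card ≤ P₁.card + (M.image chosen).card := Finset.card_union_le _ _
      have h3 : (M.image chosen).card ≤ M.card := Finset.card_image_le
      omega
    exact_mod_cast h1


private theorem stmt3_char_sol {n : ℕ} (G : SimpleGraph (Fin n)) [DecidableRel G.Adj]
    (S : Finset (Fin n)) (hS : IsMaxIndep G S) :
    IsLCPSol G (fun i => if i ∈ S then 1 else 0) := by
  classical
  have hdom : ∀ i, i ∉ S → (G.neighborFinset i ∩ S).Nonempty := by
    intro i hiS
    by_contra hne
    have hempty : G.neighborFinset i ∩ S = ∅ := Finset.not_nonempty_iff_eq_empty.mp hne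
    have hind : IsIndep G (insert i S) := by
      intro a ha b hb hab
      rcases Finset.mem_insert.mp ha with rfl | haS
      · rcases Finset.mem_insert.mp hb with rfl | hbS
        · exact G.irrefl hab
        · have hmem : b ∈ G.neighborFinset a ∩ S :=
            Finset.mem_inter.mpr ⟨(G.mem_neighborFinset a b).mpr hab, hbS⟩
          rw [hempty] at hmem
          exact Finset.notMem_empty b hmem
      · rcases Finset.mem_insert.mp hb with rfl | hbS
        · have hmem : a ∈ G.neighborFinset b ∩ S :=
            Finset.mem_inter.mpr ⟨(G.mem_neighborFinset b a).mpr hab.symm, haS⟩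
          rw [hempty] at hmem
          exact Finset.notMem_empty a hmem
        · exact hS.1 a haS b hbS hab
    have heq := hS.2 (insert i S) hind (Finset.subset_insert i S)
    exact hiS (heq ▸ Finset.mem_insert_self i S)
  have hSind : ∀ i ∈ S, G.neighborFinset i ∩ S = ∅ := by
    intro i hi
    rw [Finset.eq_empty_iff_forall_notMem]
    intro j hj
    exact hS.1 i hi j (Finset.mem_inter.mp hj).2 ((G.mem_neighborFinset i j).mp
      (Finset.mem_inter.mp hj).1)
  have hcnchar : ∀ i, cnSum G (fun i => if i ∈ S then 1 else 0) i
      = (if i ∈ S then (1:ℝ) else 0) + ((G.neighborFinset i ∩ S).card : ℝ) := by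
    intro i
    unfold cnSum
    congr 1
    rw [Finset.sum_boole, Finset.filter_mem_eq_inter]
  refine ⟨fun i => by positivity, ?_, ?_⟩
  · intro i
    rw [hcnchar i]
    by_cases hi : i ∈ S
    · rw [if_pos hi]
      have : (0:ℝ) ≤ ((G.neighborFinset i ∩ S).card : ℝ) := by positivity
      linarith
    · rw [if_neg hi]
      have hpos : 0 < (G.neighborFinset i ∩ S).card := Finset.card_pos.mpr (hdom i hi)
      have : (1:ℝ) ≤ ((G.neighborFinset i ∩ S).card : ℝ) := by exact_mod_cast hpos
      linarith
  · apply Finset.sum_eq_zero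
    intro i _
    by_cases hi : i ∈ S
    · rw [hcnchar i, if_pos hi, hSind i hi]
      simp
    · simp [hi]

/-- If `G` is a forest, the minimum of `1ᵀx` over solutions of LCP(G) equals
`β(G)`, attained by the characteristic vector of a smallest maximal
independent set. -/
theorem stmt_3 {n : ℕ} (G : SimpleGraph (Fin n)) [DecidableRel G.Adj]
    (hG : G.IsAcyclic)
    (S : Finset (Fin n)) (hS : IsMaxIndep G S)
    (hSmin : ∀ T : Finset (Fin n), IsMaxIndep G T → S.card ≤ T.card) :
    IsLeast {v : ℝ | ∃ x, IsLCPSol G x ∧ v = ∑ i, x i} (S.card : ℝ)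
      ∧ IsLCPSol G (fun i => if i ∈ S then 1 else 0) := by
  classical
  have hchar := stmt3_char_sol G S hS
  have hsumchar : ∑ i, (fun i => if i ∈ S then (1:ℝ) else 0) i = (S.card : ℝ) := by
    rw [Finset.sum_boole, Finset.filter_mem_eq_inter, Finset.univ_inter]
  refine ⟨⟨⟨_, hchar, hsumchar.symm⟩, ?_⟩, hchar⟩
  rintro v ⟨x, hx, rfl⟩
  obtain ⟨T, hT, hTle⟩ := lcp_lower G hG x hx
  have hST := hSmin T hT
  calc (S.card : ℝ) ≤ (T.card : ℝ) := by exact_mod_cast hST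
    _ ≤ ∑ i, x i := hTle
end

section
/- If G is a d-regular graph on n vertices, then the minimum of 1ᵀx over all solutions of LCP(G) equals n/(d+1), and the constant vector with all entries 1/(d+1) is a minimizing solution. -/
lemma double_count {n : ℕ} (G : SimpleGraph (Fin n)) [DecidableRel G.Adj]
    (x : Fin n → ℝ) :
    ∑ i, ∑ j ∈ G.neighborFinset i, x j = ∑ j, (G.degree j : ℝ) * x j := by
  simp only [SimpleGraph.neighborFinset_eq_filter, Finset.sum_filter]
  rw [Finset.sum_comm]
  refine Finset.sum_congr rfl fun j _ => ?_
  have h : ∀ i : Fin n, (if G.Adj i j then x j else 0) = if G.Adj j i then x j else 0 := by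
    intro i; simp [SimpleGraph.adj_comm]
  simp_rw [h]
  rw [Finset.sum_ite, Finset.sum_const, Finset.sum_const]
  simp [SimpleGraph.degree, SimpleGraph.neighborFinset_eq_filter, mul_comm]


/-- If `G` is `d`-regular on `n` vertices, the minimum of `1ᵀx` over solutions
of LCP(G) equals `n/(d+1)`, and the constant vector `1/(d+1)` is a minimizing
solution. -/
theorem stmt_4 {n : ℕ} (G : SimpleGraph (Fin n)) [DecidableRel G.Adj]
    (d : ℕ) (hreg : G.IsRegularOfDegree d) :
    IsLeast {v : ℝ | ∃ x, IsLCPSol G x ∧ v = ∑ i, x i} ((n : ℝ) / (d + 1))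
      ∧ IsLCPSol G (fun _ => 1 / ((d : ℝ) + 1)) := by
  have hd1 : (0:ℝ) < (d:ℝ) + 1 := by positivity
  have hcn : ∀ i, cnSum G (fun _ => 1 / ((d : ℝ) + 1)) i = 1 := by
    intro i
    simp only [cnSum, Finset.sum_const, SimpleGraph.card_neighborFinset_eq_degree, hreg i,
      nsmul_eq_mul]
    field_simp
    ring
  have hsol : IsLCPSol G (fun _ => 1 / ((d : ℝ) + 1)) := by
    refine ⟨fun i => by positivity, fun i => (hcn i).ge, ?_⟩
    have : ∀ i, cnSum G (fun _ => ((d:ℝ)+1)⁻¹) i = 1 := by simpa [one_div] using hcn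
    simp [this]
  refine ⟨⟨⟨fun _ => 1 / ((d : ℝ) + 1), hsol, ?_⟩, ?_⟩, hsol⟩
  · simp [Finset.sum_const, div_eq_div_iff hd1.ne']
    ring
  · rintro v ⟨x, ⟨hx0, hx1, -⟩, rfl⟩
    rw [div_le_iff₀ hd1]
    have key : ∑ i, cnSum G x i = (∑ i, x i) * ((d:ℝ) + 1) := by
      simp only [cnSum, Finset.sum_add_distrib, double_count, hreg]
      rw [Finset.sum_mul, ← Finset.sum_add_distrib]
      exact Finset.sum_congr rfl fun i _ => by rw [hreg i]; ring
    calc (n:ℝ) = ∑ _i : Fin n, (1:ℝ) := by simp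
      _ ≤ ∑ i, cnSum G x i := Finset.sum_le_sum fun i _ => hx1 i
      _ = _ := key
end

section
/- If G is a forest and x is a solution of LCP(G), then there exists a maximal independent set S of G with S ⊆ supp(x), where supp(x) = {i : x_i ≠ 0}. -/
section Infra

open SimpleGraph Finset Walk

variable {n : ℕ} (G : SimpleGraph (Fin n))

/-- A fixed representative ("root") of the connected component of `v`. -/
noncomputable def rtAux (v : Fin n) : Fin n :=
  Quot.out (G.connectedComponentMk v)

lemma rt_reach (v : Fin n) : G.Reachable (rtAux G v) v :=
  SimpleGraph.ConnectedComponent.eq.mp (Quot.out_eq (G.connectedComponentMk v))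

lemma rt_adj {u w : Fin n} (h : G.Adj u w) : rtAux G u = rtAux G w := by
  unfold rtAux
  rw [SimpleGraph.ConnectedComponent.connectedComponentMk_eq_of_adj h]

/-- Depth of a vertex: distance to the root of its component. -/
noncomputable def depthAux (v : Fin n) : ℕ :=
  G.dist (rtAux G v) v

lemma dist_le_of_mem_support {r u w : Fin n} (p : G.Walk r u) (h : w ∈ p.support) :
    G.dist r w ≤ p.length :=
  le_trans (SimpleGraph.dist_le (p.takeUntil w h)) (Walk.length_takeUntil_le p h)

lemma depth_ne (hG : G.IsAcyclic) {u w : Fin n} (h : G.Adj u w) :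
    depthAux G u ≠ depthAux G w := by
  intro heq
  obtain ⟨p, hp, hpl⟩ := (rt_reach G u).exists_path_of_dist
  obtain ⟨q, hq, hql⟩ := (rt_reach G w).exists_path_of_dist
  have hr : rtAux G w = rtAux G u := (rt_adj G h).symm
  have hdw : G.dist (rtAux G u) w = depthAux G w := by rw [depthAux, hr]
  have hdu : depthAux G u = G.dist (rtAux G u) u := rfl
  have hdw' : depthAux G w = G.dist (rtAux G w) w := rfl
  have hwp : w ∉ p.support := by
    intro hmem
    have h1 : G.dist (rtAux G u) w ≤ (p.takeUntil w hmem).length := SimpleGraph.dist_le _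
    have h3 := congrArg Walk.length (p.take_spec hmem)
    rw [Walk.length_append] at h3
    have h4 : (p.dropUntil w hmem).length = 0 := by omega
    have h5 : w = u := Walk.eq_of_length_eq_zero h4
    rw [h5] at h
    exact G.irrefl h
  have hp' : (p.concat h).IsPath := by
    rw [← Walk.isPath_reverse_iff, Walk.reverse_concat]
    refine (Walk.cons_isPath_iff _ _).2 ⟨hp.reverse, ?_⟩
    simpa [Walk.support_reverse] using hwp
  have hq' : (q.copy hr rfl).IsPath := (Walk.isPath_copy _ _ _).2 hq
  have hEq := isAcyclic_iff_path_unique.mp hG ⟨p.concat h, hp'⟩ ⟨q.copy hr rfl, hq'⟩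
  have hlen := congrArg (fun P : G.Path (rtAux G u) w => P.1.length) hEq
  simp only [Walk.length_concat, Walk.length_copy] at hlen
  omega

lemma depth_le (hG : G.IsAcyclic) {u w : Fin n} (h : G.Adj u w) :
    depthAux G w ≤ depthAux G u + 1 := by
  obtain ⟨p, hp, hpl⟩ := (rt_reach G u).exists_path_of_dist
  have h1 : G.dist (rtAux G u) w ≤ (p.concat h).length := SimpleGraph.dist_le _
  rw [Walk.length_concat, hpl] at h1
  have hr : rtAux G w = rtAux G u := (rt_adj G h).symm
  rw [depthAux, hr]
  simp only [depthAux] at h1 ⊢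
  omega

lemma depth_step (hG : G.IsAcyclic) {u w : Fin n} (h : G.Adj u w) :
    depthAux G w = depthAux G u + 1 ∨ depthAux G u = depthAux G w + 1 := by
  have h1 := depth_le G hG h
  have h2 := depth_le G hG h.symm
  have h3 := depth_ne G hG h
  omega

lemma parent_unique (hG : G.IsAcyclic) {v u1 u2 : Fin n}
    (h1 : G.Adj v u1) (h2 : G.Adj v u2)
    (hd1 : depthAux G u1 + 1 = depthAux G v) (hd2 : depthAux G u2 + 1 = depthAux G v) :
    u1 = u2 := by
  obtain ⟨p1, hp1, hl1⟩ := (rt_reach G u1).exists_path_of_dist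
  obtain ⟨p2, hp2, hl2⟩ := (rt_reach G u2).exists_path_of_dist
  have hr1 : rtAux G u1 = rtAux G v := rt_adj G h1.symm
  have hr2 : rtAux G u2 = rtAux G v := rt_adj G h2.symm
  set r := rtAux G v with hrdef
  have key : ∀ (u : Fin n) (h : G.Adj v u) (p : G.Walk (rtAux G u) u), p.IsPath →
      p.length = G.dist (rtAux G u) u → depthAux G u + 1 = depthAux G v →
      ((p.copy (by rw [rt_adj G h.symm]) rfl).concat h.symm).IsPath := by
    intro u h p hp hl hd
    have hru : rtAux G u = r := rt_adj G h.symm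
    have hvp : v ∉ (p.copy hru rfl).support := by
      intro hmem
      have h1' : G.dist r v ≤ (p.copy hru rfl).length :=
        dist_le_of_mem_support G _ hmem
      rw [Walk.length_copy, hl, hru] at h1'
      simp only [depthAux, hru, ← hrdef] at hd
      omega
    rw [← Walk.isPath_reverse_iff, Walk.reverse_concat]
    refine (Walk.cons_isPath_iff _ _).2 ⟨((Walk.isPath_copy _ _ _).2 hp).reverse, ?_⟩
    simpa [Walk.support_reverse] using hvp
  have hq1 := key u1 h1 p1 hp1 hl1 hd1
  have hq2 := key u2 h2 p2 hp2 hl2 hd2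
  have hEq := isAcyclic_iff_path_unique.mp hG ⟨_, hq1⟩ ⟨_, hq2⟩
  have hwEq := congrArg (fun P : G.Path r v => P.1) hEq
  obtain ⟨hv, -⟩ := Walk.concat_inj hwEq
  exact hv

end Infra

/-- If `G` is a forest and `x` solves LCP(G), then some maximal independent
set `S` of `G` is contained in the support of `x`. -/
theorem stmt_5 {n : ℕ} (G : SimpleGraph (Fin n)) [DecidableRel G.Adj]
    (hG : G.IsAcyclic) (x : Fin n → ℝ) (hx : IsLCPSol G x) :
    ∃ S : Finset (Fin n), IsMaxIndep G S ∧ ∀ i ∈ S, x i ≠ 0 := by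
  classical
  obtain ⟨hnn, hge, hcomp⟩ := hx
  have hone : ∀ i, x i ≠ 0 → cnSum G x i = 1 := by
    intro i hi
    have h0 : ∀ j ∈ Finset.univ, 0 ≤ x j * (cnSum G x j - 1) := by
      intro j _
      have h1 := hge j
      have h2 := hnn j
      nlinarith
    have hz := (Finset.sum_eq_zero_iff_of_nonneg h0).mp hcomp i (Finset.mem_univ i)
    rcases mul_eq_zero.mp hz with h | h
    · exact absurd h hi
    · linarith
  have hxpos : ∀ i, x i ≠ 0 → 0 < x i := fun i h => lt_of_le_of_ne (hnn i) (Ne.symm h)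
  have hbound1 : ∀ v w, G.Adj v w → x v + x w ≤ cnSum G x v := by
    intro v w h
    have hmem : w ∈ G.neighborFinset v := (SimpleGraph.mem_neighborFinset _ _ _).2 h
    have h1 := Finset.single_le_sum (f := x) (fun j _ => hnn j) hmem
    unfold cnSum
    linarith
  have hbound2 : ∀ v a b, G.Adj v a → G.Adj v b → a ≠ b →
      x v + (x a + x b) ≤ cnSum G x v := by
    intro v a b ha hb hab
    have hsub : ({a, b} : Finset (Fin n)) ⊆ G.neighborFinset v := by
      intro j hj
      rcases Finset.mem_insert.mp hj with rfl | hj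
      · exact (SimpleGraph.mem_neighborFinset _ _ _).2 ha
      · rw [Finset.mem_singleton] at hj
        subst hj
        exact (SimpleGraph.mem_neighborFinset _ _ _).2 hb
    have h1 : ∑ j ∈ ({a, b} : Finset (Fin n)), x j ≤ ∑ j ∈ G.neighborFinset v, x j :=
      Finset.sum_le_sum_of_subset_of_nonneg hsub (fun j _ _ => hnn j)
    rw [Finset.sum_pair hab] at h1
    unfold cnSum
    linarith
  have hprop : ∀ v w, G.Adj v w → x v ≠ 0 → x w ≠ 0 → x v + x w < 1 →
      ∃ w', G.Adj w w' ∧ w' ≠ v ∧ x w' ≠ 0 ∧ x w + x w' < 1 := by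
    intro v w hadj hv hw hlt
    by_contra hcon
    push_neg at hcon
    have hall : ∀ j ∈ G.neighborFinset w, j ≠ v → x j = 0 := by
      intro j hj hne
      by_contra hjx
      have hadjwj : G.Adj w j := (SimpleGraph.mem_neighborFinset _ _ _).1 hj
      have h2 := hcon j hadjwj hne hjx
      have h3 := hbound2 w v j hadj.symm hadjwj (Ne.symm hne)
      rw [hone w hw] at h3
      have h5 := hxpos v hv
      linarith
    have hsum : ∑ j ∈ G.neighborFinset w, x j = x v := by
      apply Finset.sum_eq_single_of_mem v ((SimpleGraph.mem_neighborFinset _ _ _).2 hadj.symm)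
      exact fun j hj hne => hall j hj hne
    have h4 := hone w hw
    unfold cnSum at h4
    rw [hsum] at h4
    linarith
  have hle1 : ∀ v w, G.Adj v w → x v ≠ 0 → x w ≠ 0 → x v + x w ≤ 1 := by
    intro v w h hv hw
    have h1 := hbound1 v w h
    rw [hone v hv] at h1
    linarith
  have hL1 : ∀ v w, G.Adj v w → x v ≠ 0 → x w ≠ 0 → x v + x w = 1 := by
    by_contra hcon
    push_neg at hcon
    obtain ⟨v0, w0, hadj0, hv0, hw0, hne0⟩ := hcon
    set B : Finset (Fin n × Fin n) := Finset.univ.filter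
      (fun p => G.Adj p.1 p.2 ∧ x p.1 ≠ 0 ∧ x p.2 ≠ 0 ∧ x p.1 + x p.2 < 1) with hB
    have hBmem : ∀ a b : Fin n, (a, b) ∈ B ↔
        G.Adj a b ∧ x a ≠ 0 ∧ x b ≠ 0 ∧ x a + x b < 1 := by
      intro a b
      simp [hB]
    have hB0 : (v0, w0) ∈ B := (hBmem _ _).2
      ⟨hadj0, hv0, hw0, lt_of_le_of_ne (hle1 _ _ hadj0 hv0 hw0) hne0⟩
    obtain ⟨⟨v, w⟩, hmem, hmax⟩ :=
      Finset.exists_max_image B (fun p => depthAux G p.2) ⟨_, hB0⟩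
    obtain ⟨hadj, hv, hw, hlt⟩ := (hBmem _ _).1 hmem
    have hdvw : depthAux G v ≤ depthAux G w :=
      hmax (w, v) ((hBmem _ _).2 ⟨hadj.symm, hw, hv, by linarith⟩)
    obtain ⟨w', hadj', hne', hw'x, hlt'⟩ := hprop v w hadj hv hw hlt
    have hdw' : depthAux G w' ≤ depthAux G w :=
      hmax (w, w') ((hBmem _ _).2 ⟨hadj', hw, hw'x, hlt'⟩)
    have p1 := depth_step G hG hadj
    have p2 := depth_step G hG hadj'
    exact hne' (parent_unique G hG hadj' hadj.symm (by omega) (by omega))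
  have hL2 : ∀ u a b, G.Adj u a → G.Adj u b → a ≠ b → x u ≠ 0 → x a ≠ 0 → x b ≠ 0 →
      False := by
    intro u a b ha hb hab hu hax hbx
    have h1 := hL1 u a ha hu hax
    have h2 := hL1 u b hb hu hbx
    have h3 := hbound2 u a b ha hb hab
    rw [hone u hu] at h3
    have h4 := hxpos a hax
    have h5 := hxpos b hbx
    linarith
  set S : Finset (Fin n) := Finset.univ.filter
    (fun u => x u ≠ 0 ∧ ∀ w, G.Adj u w → x w ≠ 0 → depthAux G w = depthAux G u + 1)
    with hS
  have hmemS : ∀ u, u ∈ S ↔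
      x u ≠ 0 ∧ ∀ w, G.Adj u w → x w ≠ 0 → depthAux G w = depthAux G u + 1 := by
    intro u
    simp [hS]
  have hind : IsIndep G S := by
    intro i hi j hj hadj
    obtain ⟨hix, hifa⟩ := (hmemS i).1 hi
    obtain ⟨hjx, hjfa⟩ := (hmemS j).1 hj
    have h1 := hifa j hadj hjx
    have h2 := hjfa i hadj.symm hix
    omega
  have hdom : ∀ v, v ∉ S → ∃ s ∈ S, G.Adj v s := by
    intro v hv
    by_cases hvx : x v = 0
    · by_cases hA : ∃ u, G.Adj v u ∧ x u ≠ 0 ∧ depthAux G u = depthAux G v + 1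
      · obtain ⟨u, hadj, hux, hd⟩ := hA
        refine ⟨u, (hmemS u).2 ⟨hux, ?_⟩, hadj⟩
        intro z hz hzx
        rcases depth_step G hG hz with h | h
        · exact h
        · exfalso
          have hzv : z = v := parent_unique G hG hz hadj.symm (by omega) (by omega)
          rw [hzv] at hzx
          exact hzx hvx
      · push_neg at hA
        have hsum1 : (1 : ℝ) ≤ ∑ j ∈ G.neighborFinset v, x j := by
          have h1 := hge v
          unfold cnSum at h1
          rw [hvx] at h1
          linarith
        obtain ⟨u0, hu0m, hu0x⟩ : ∃ u ∈ G.neighborFinset v, x u ≠ 0 := by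
          by_contra hcon
          push_neg at hcon
          have h1 : ∑ j ∈ G.neighborFinset v, x j = 0 := Finset.sum_eq_zero hcon
          linarith
        have hadj0 : G.Adj v u0 := (SimpleGraph.mem_neighborFinset _ _ _).1 hu0m
        have hd0 : depthAux G u0 + 1 = depthAux G v := by
          rcases depth_step G hG hadj0 with h | h
          · exact absurd h (hA u0 hadj0 hu0x)
          · omega
        have hsingle : ∑ j ∈ G.neighborFinset v, x j = x u0 := by
          apply Finset.sum_eq_single_of_mem u0 hu0m
          intro j hjm hjne
          by_contra hjx
          have hadjj : G.Adj v j := (SimpleGraph.mem_neighborFinset _ _ _).1 hjm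
          have hdj : depthAux G j + 1 = depthAux G v := by
            rcases depth_step G hG hadjj with h | h
            · exact absurd h (hA j hadjj hjx)
            · omega
          exact hjne (parent_unique G hG hadjj hadj0 hdj hd0)
        rw [hsingle] at hsum1
        refine ⟨u0, (hmemS u0).2 ⟨hu0x, ?_⟩, hadj0⟩
        intro z hz hzx
        exfalso
        have h3 := hbound1 u0 z hz
        rw [hone u0 hu0x] at h3
        have h4 := hxpos z hzx
        linarith
    · have hnall : ¬ (∀ w, G.Adj v w → x w ≠ 0 → depthAux G w = depthAux G v + 1) := by
        intro hall
        exact hv ((hmemS v).2 ⟨hvx, hall⟩)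
      push_neg at hnall
      obtain ⟨w, hadj, hwx, hne⟩ := hnall
      have hd : depthAux G w + 1 = depthAux G v := by
        rcases depth_step G hG hadj with h | h
        · exact absurd h hne
        · omega
      refine ⟨w, (hmemS w).2 ⟨hwx, ?_⟩, hadj⟩
      intro z hz hzx
      by_cases hzv : z = v
      · rw [hzv]
        omega
      · exact (hL2 w z v hz hadj.symm hzv hwx hzx hvx).elim
  refine ⟨S, ⟨hind, ?_⟩, fun i hi => ((hmemS i).1 hi).1⟩
  intro T hT hST
  refine Finset.Subset.antisymm ?_ hST
  intro t ht
  by_contra htS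
  obtain ⟨s, hsS, hadj⟩ := hdom t htS
  exact hT t ht s (hST hsS) hadj
end

section
/- A profile of efforts x ∈ ℝ^n_{≥0} is a Nash equilibrium of the public goods game on graph G with benefit function b and marginal cost c (where b'(e*) = c) if and only if (1/e*)·x solves LCP(G). -/
/-- Utility of agent `i`: benefit from the closed-neighbourhood effort minus
the cost of own effort. -/
def utility {n : ℕ} (G : SimpleGraph (Fin n)) [DecidableRel G.Adj]
    (b : ℝ → ℝ) (c : ℝ) (x : Fin n → ℝ) (i : Fin n) : ℝ :=
  b (cnSum G x i) - c * x i

/-- `x` is a Nash equilibrium: no agent can improve its utility by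
unilaterally changing its own (nonnegative) effort. -/
def IsNashEq {n : ℕ} (G : SimpleGraph (Fin n)) [DecidableRel G.Adj]
    (b : ℝ → ℝ) (c : ℝ) (x : Fin n → ℝ) : Prop :=
  ∀ i, ∀ y : ℝ, 0 ≤ y →
    utility G b c (Function.update x i y) i ≤ utility G b c x i

/-- Non-strict tangent-line inequality for a concave function. -/
lemma tangent_le {b : ℝ → ℝ} (hb : Differentiable ℝ b)
    (hconc : ConcaveOn ℝ (Set.Ici 0) b) {u v : ℝ} (hu : 0 ≤ u) (hv : 0 ≤ v) :
    b u ≤ b v + deriv b v * (u - v) := by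
  rcases lt_trichotomy u v with h | h | h
  · have := hconc.deriv_le_slope hu hv h (hb v)
    rw [slope_def_field, le_div_iff₀ (by linarith)] at this
    nlinarith
  · simp [h]
  · have := hconc.slope_le_deriv hv hu h (hb v)
    rw [slope_def_field, div_le_iff₀ (by linarith)] at this
    nlinarith

/-- Strict tangent-line inequality for a strictly concave function. -/
lemma tangent_lt {b : ℝ → ℝ} (hb : Differentiable ℝ b)
    (hconc : StrictConcaveOn ℝ (Set.Ici 0) b) {u v : ℝ} (hu : 0 ≤ u) (hv : 0 ≤ v)
    (huv : u ≠ v) :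
    b u < b v + deriv b v * (u - v) := by
  rcases lt_trichotomy u v with h | h | h
  · have := hconc.deriv_lt_slope hu hv h (hb v)
    rw [slope_def_field, lt_div_iff₀ (by linarith)] at this
    nlinarith
  · exact absurd h huv
  · have := hconc.slope_lt_deriv hv hu h (hb v)
    rw [slope_def_field, div_lt_iff₀ (by linarith)] at this
    nlinarith

lemma cnSum_update {n : ℕ} (G : SimpleGraph (Fin n)) [DecidableRel G.Adj]
    (x : Fin n → ℝ) (i : Fin n) (y : ℝ) :
    cnSum G (Function.update x i y) i = y + ∑ j ∈ G.neighborFinset i, x j := by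
  unfold cnSum
  rw [Function.update_self]
  congr 1
  refine Finset.sum_congr rfl fun j hj => ?_
  have hji : j ≠ i := by
    rintro rfl
    rw [SimpleGraph.mem_neighborFinset] at hj
    exact G.irrefl hj
  exact Function.update_of_ne hji y x

/-- Bramoullé–Kranton characterization of Nash equilibria. -/
lemma nash_iff_bk {n : ℕ} (G : SimpleGraph (Fin n)) [DecidableRel G.Adj]
    (b : ℝ → ℝ) (c estar : ℝ)
    (hb : Differentiable ℝ b)
    (hconc : StrictConcaveOn ℝ (Set.Ici 0) b)
    (he : 0 < estar) (hderiv : deriv b estar = c)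
    (x : Fin n → ℝ) (hx : ∀ i, 0 ≤ x i) :
    IsNashEq G b c x ↔
      ∀ i, estar ≤ cnSum G x i ∧ x i * (cnSum G x i - estar) = 0 := by
  constructor
  · intro hN i
    set s := ∑ j ∈ G.neighborFinset i, x j with hs_def
    have hs : 0 ≤ s := Finset.sum_nonneg fun j _ => hx j
    have hxi := hx i
    have ht_def : cnSum G x i = x i + s := rfl
    rw [ht_def]
    have hge : estar ≤ x i + s := by
      by_contra hlt
      push_neg at hlt
      have hy : 0 ≤ estar - s := by linarith
      have hnash := hN i (estar - s) hy
      unfold utility at hnash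
      rw [cnSum_update, Function.update_self, ht_def, ← hs_def] at hnash
      have heq : estar - s + s = estar := by ring
      rw [heq] at hnash
      have htan := tangent_lt hb hconc (by positivity : (0:ℝ) ≤ x i + s)
        he.le (by linarith)
      rw [hderiv] at htan
      nlinarith
    refine ⟨hge, ?_⟩
    rcases eq_or_lt_of_le hge with heq | hgt
    · rw [← heq]; ring
    have hxi0 : x i = 0 := by
      by_contra hne
      have hxipos : 0 < x i := lt_of_le_of_ne hxi (Ne.symm hne)
      rcases le_or_gt estar s with hse | hse
      · -- deviate to 0
        have hnash := hN i 0 le_rfl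
        unfold utility at hnash
        rw [cnSum_update, Function.update_self, ht_def, ← hs_def] at hnash
        rw [zero_add] at hnash
        have hts : s < x i + s := by linarith
        have htan := tangent_lt hb hconc (by positivity : (0:ℝ) ≤ x i + s)
          hs (ne_of_gt hts)
        have hanti : deriv b s ≤ deriv b estar := by
          rcases eq_or_lt_of_le hse with h | h
          · rw [h]
          · exact le_of_lt (hconc.strictAntiOn_deriv
              (fun z _ => hb z) he.le hs h)
        rw [hderiv] at hanti
        nlinarith [mul_le_mul_of_nonneg_right hanti hxipos.le]
      · -- deviate to estar - s > 0
        have hnash := hN i (estar - s) (by linarith)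
        unfold utility at hnash
        rw [cnSum_update, Function.update_self, ht_def, ← hs_def] at hnash
        have heq : estar - s + s = estar := by ring
        rw [heq] at hnash
        have htan := tangent_lt hb hconc (by positivity : (0:ℝ) ≤ x i + s)
          he.le (ne_of_gt hgt)
        rw [hderiv] at htan
        nlinarith
    rw [hxi0, zero_mul]
  · intro hBK i y hy
    obtain ⟨hge, hcomp⟩ := hBK i
    set s := ∑ j ∈ G.neighborFinset i, x j with hs_def
    have hs : 0 ≤ s := Finset.sum_nonneg fun j _ => hx j
    have hxi := hx i
    have ht_def : cnSum G x i = x i + s := rfl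
    unfold utility
    rw [cnSum_update, Function.update_self, ht_def, ← hs_def]
    rw [ht_def] at hge hcomp
    rcases eq_or_lt_of_le hxi with hxi0 | hxipos
    · -- x i = 0, so s ≥ estar
      have hse : estar ≤ s := by rw [← hxi0, zero_add] at hge; exact hge
      have htan := tangent_le hb hconc.concaveOn (by linarith : (0:ℝ) ≤ y + s) hs
      have hanti : deriv b s ≤ deriv b estar := by
        rcases eq_or_lt_of_le hse with h | h
        · rw [h]
        · exact le_of_lt (hconc.strictAntiOn_deriv
            (fun z _ => hb z) he.le hs h)
      rw [hderiv] at hanti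
      rw [← hxi0, zero_add]
      nlinarith [mul_le_mul_of_nonneg_right hanti hy]
    · -- x i > 0, so x i + s = estar
      have hte : x i + s = estar := by
        rcases mul_eq_zero.mp hcomp with h | h
        · linarith
        · linarith
      have htan := tangent_le hb hconc.concaveOn (by linarith : (0:ℝ) ≤ y + s) he.le
      rw [hderiv, ← hte] at htan
      nlinarith

/-- A nonnegative effort profile `x` is a Nash equilibrium of the public
goods game on `G` (benefit `b` differentiable, strictly increasing and
strictly concave on `[0,∞)`, marginal cost `c = b'(e*)`, `e* > 0`) iff
`(1/e*)·x` solves LCP(G). -/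
theorem stmt_6 {n : ℕ} (G : SimpleGraph (Fin n)) [DecidableRel G.Adj]
    (b : ℝ → ℝ) (c estar : ℝ)
    (hb : Differentiable ℝ b)
    (hmono : StrictMonoOn b (Set.Ici 0))
    (hconc : StrictConcaveOn ℝ (Set.Ici 0) b)
    (hc : 0 < c) (he : 0 < estar) (hderiv : deriv b estar = c)
    (x : Fin n → ℝ) (hx : ∀ i, 0 ≤ x i) :
    IsNashEq G b c x ↔ IsLCPSol G (fun i => x i / estar) := by
  rw [nash_iff_bk G b c estar hb hconc he hderiv x hx]
  have hne : estar ≠ 0 := ne_of_gt he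
  have hcs : ∀ i, cnSum G (fun j => x j / estar) i = cnSum G x i / estar := by
    intro i
    simp only [cnSum, Finset.sum_div, add_div]
  have hiden : ∀ i, x i / estar * (cnSum G x i / estar - 1)
      = x i * (cnSum G x i - estar) / (estar * estar) := by
    intro i
    field_simp
  constructor
  · intro hBK
    refine ⟨fun i => div_nonneg (hx i) he.le, fun i => ?_, ?_⟩
    · rw [hcs i, le_div_iff₀ he, one_mul]
      exact (hBK i).1
    · rw [Finset.sum_eq_zero]
      intro i _
      rw [hcs i, hiden i, (hBK i).2, zero_div]
  · intro ⟨_, hge, hsum⟩ i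
    have hge' : estar ≤ cnSum G x i := by
      have := hge i
      rw [hcs i, le_div_iff₀ he, one_mul] at this
      exact this
    refine ⟨hge', ?_⟩
    have hterm : ∀ j, 0 ≤ x j / estar * (cnSum G (fun k => x k / estar) j - 1) := by
      intro j
      apply mul_nonneg (div_nonneg (hx j) he.le)
      linarith [hge j]
    have hzero := (Finset.sum_eq_zero_iff_of_nonneg
      (fun j _ => hterm j)).mp hsum i (Finset.mem_univ i)
    rw [hcs i, hiden i, div_eq_zero_iff] at hzero
    rcases hzero with h | h
    · exact h
    · exact absurd h (by positivity)
end

section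
/- In any Nash equilibrium x of the public goods game on G, every neighbor of a specialist (an agent with x_i = e*) is a free rider (x_j = 0); consequently, the set of specialists forms an independent set of G. -/
/-- `x` is a Nash equilibrium of the public goods game on `G` with maximal
solo effort `estar` (Bramoullé–Kranton characterization): for every agent `i`,
`x_i ≥ 0`, `s_i(x) ≥ e*` and `x_i (s_i(x) - e*) = 0`. -/
def IsNE {n : ℕ} (G : SimpleGraph (Fin n)) [DecidableRel G.Adj]
    (estar : ℝ) (x : Fin n → ℝ) : Prop :=
  ∀ i, 0 ≤ x i ∧ estar ≤ cnSum G x i ∧ x i * (cnSum G x i - estar) = 0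

/-- In any Nash equilibrium, every neighbour of a specialist free rides, so
the specialists form an independent set. -/
theorem stmt_8 {n : ℕ} (G : SimpleGraph (Fin n)) [DecidableRel G.Adj]
    (estar : ℝ) (he : 0 < estar) (x : Fin n → ℝ) (hx : IsNE G estar x) :
    (∀ i j, x i = estar → G.Adj i j → x j = 0) ∧
      (∀ i j, x i = estar → x j = estar → ¬ G.Adj i j) := by
  have key : ∀ i j, x i = estar → G.Adj i j → x j = 0 := by
    intro i j hi hij
    obtain ⟨_, _, hcomp⟩ := hx i
    have hxi : x i ≠ 0 := by rw [hi]; exact he.ne'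
    have hs : cnSum G x i = estar := by
      have := mul_eq_zero.mp hcomp
      rcases this with h | h
      · exact absurd h hxi
      · linarith
    have hsum : ∑ k ∈ G.neighborFinset i, x k = 0 := by
      unfold cnSum at hs; rw [hi] at hs; linarith
    have hmem : j ∈ G.neighborFinset i := by
      rwa [SimpleGraph.mem_neighborFinset]
    have := Finset.sum_eq_zero_iff_of_nonneg (fun k _ => (hx k).1) |>.mp hsum j hmem
    exact this
  refine ⟨key, fun i j hi hj hij => ?_⟩
  have := key i j hi hij
  rw [hj] at this
  exact he.ne' this
end

section
/- In any Nash equilibrium x of the public goods game on G, if i and j are adjacent agents with x_i > 0, x_j > 0 and x_i + x_j = e* (a co-specialist pair), then every other neighbor of i and every other neighbor of j is a free rider; consequently the set of co-specialist edges forms a matching of G. -/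
lemma aux_free {n : ℕ} (G : SimpleGraph (Fin n)) [DecidableRel G.Adj]
    (estar : ℝ) (x : Fin n → ℝ) (hx : IsNE G estar x)
    {i j k : Fin n} (hij : G.Adj i j) (hi : 0 < x i)
    (hsum : x i + x j = estar) (hik : G.Adj i k) (hkj : k ≠ j) :
    x k = 0 := by
  have hci : cnSum G x i = estar := by
    obtain ⟨_, _, hc⟩ := hx i
    rcases mul_eq_zero.mp hc with h | h
    · exact absurd h (ne_of_gt hi)
    · linarith
  have hjmem : j ∈ G.neighborFinset i := by simpa using hij
  have hkmem : k ∈ G.neighborFinset i := by simpa using hik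
  have hsub : ({j, k} : Finset (Fin n)) ⊆ G.neighborFinset i := by
    intro a ha
    rcases Finset.mem_insert.mp ha with rfl | ha
    · exact hjmem
    · rw [Finset.mem_singleton.mp ha]; exact hkmem
  have hge : x j + x k ≤ ∑ a ∈ G.neighborFinset i, x a := by
    have := Finset.sum_le_sum_of_subset_of_nonneg hsub
      (fun a _ _ => (hx a).1)
    simpa [Finset.sum_pair (Ne.symm hkj)] using this
  have hk0 : 0 ≤ x k := (hx k).1
  have : x i + (x j + x k) ≤ estar := by
    rw [← hci]; unfold cnSum; linarith
  linarith

/-- In any Nash equilibrium, all other neighbours of a co-specialist pair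
free ride; consequently the co-specialist links form a matching (each agent
belongs to at most one co-specialist pair). -/
theorem stmt_9 {n : ℕ} (G : SimpleGraph (Fin n)) [DecidableRel G.Adj]
    (estar : ℝ) (he : 0 < estar) (x : Fin n → ℝ) (hx : IsNE G estar x) :
    (∀ i j, G.Adj i j → 0 < x i → 0 < x j → x i + x j = estar →
      ∀ k, k ≠ i → k ≠ j → (G.Adj i k ∨ G.Adj j k) → x k = 0) ∧
    (∀ i j k, (G.Adj i j ∧ 0 < x i ∧ 0 < x j ∧ x i + x j = estar) →
      (G.Adj i k ∧ 0 < x i ∧ 0 < x k ∧ x i + x k = estar) → j = k) := by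
  constructor
  · intro i j hij hi hj hsum k hki hkj hadj
    rcases hadj with h | h
    · exact aux_free G estar x hx hij hi hsum h hkj
    · exact aux_free G estar x hx hij.symm hj (by linarith) h hki
  · intro i j k ⟨hij, hi, hj, hs⟩ ⟨hik, _, hk, hs'⟩
    by_contra hne
    have := aux_free G estar x hx hij hi hs hik (Ne.symm hne)
    linarith
end

section
/- In a network containing a guardian with at least two dependants, every Nash equilibrium x of the public goods game satisfies: either all dependants of that guardian are free riders (x = 0) and the guardian is a specialist (x = e*), or all dependants are specialists and the guardian is a free rider. -/
lemma cn_dep {n : ℕ} (G : SimpleGraph (Fin n)) [DecidableRel G.Adj]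
    (x : Fin n → ℝ) {i d : Fin n} (hd : G.Adj i d) (hdd : G.degree d = 1) :
    cnSum G x d = x d + x i := by
  have hi : i ∈ G.neighborFinset d := by simp [hd.symm]
  obtain ⟨a, ha⟩ := Finset.card_eq_one.mp hdd
  rw [ha] at hi
  simp only [Finset.mem_singleton] at hi
  subst hi
  simp [cnSum, ha]

/-- If a guardian `i` has at least two dependants, then in any Nash
equilibrium either all dependants of `i` free ride and `i` is a specialist,
or all dependants of `i` are specialists and `i` free rides. -/
theorem stmt_11 {n : ℕ} (G : SimpleGraph (Fin n)) [DecidableRel G.Adj]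
    (estar : ℝ) (he : 0 < estar) (x : Fin n → ℝ) (hx : IsNE G estar x)
    (i j k : Fin n) (hjk : j ≠ k)
    (hj : G.Adj i j) (hk : G.Adj i k)
    (hdj : G.degree j = 1) (hdk : G.degree k = 1) :
    ((∀ d, G.Adj i d → G.degree d = 1 → x d = 0) ∧ x i = estar) ∨
    ((∀ d, G.Adj i d → G.degree d = 1 → x d = estar) ∧ x i = 0) := by
  by_cases hxi : x i = 0
  · -- all dependants are specialists
    right
    refine ⟨fun d hd hdd => ?_, hxi⟩
    obtain ⟨hd0, hdge, hdc⟩ := hx d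
    rw [cn_dep G x hd hdd, hxi, add_zero] at hdge hdc
    have hdne : x d ≠ 0 := (lt_of_lt_of_le he hdge).ne'
    have := (mul_eq_zero.mp hdc).resolve_left hdne
    linarith
  · -- guardian is specialist
    left
    obtain ⟨hi0, hige, hic⟩ := hx i
    have hipos : 0 < x i := lt_of_le_of_ne hi0 (Ne.symm hxi)
    have hieq : cnSum G x i = estar := by
      have := (mul_eq_zero.mp hic).resolve_left hxi
      linarith
    have hzero : ∀ d, G.Adj i d → G.degree d = 1 → x d = 0 := by
      intro d hd hdd
      by_contra hdne
      obtain ⟨hd0, hdge, hdc⟩ := hx d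
      have hdpos : 0 < x d := lt_of_le_of_ne hd0 (Ne.symm hdne)
      rw [cn_dep G x hd hdd] at hdge hdc
      have hdeq : x d + x i = estar := by
        have := (mul_eq_zero.mp hdc).resolve_left hdne
        linarith
      -- pick w ∈ {j,k} with w ≠ d
      obtain ⟨w, hw, hdw, hww⟩ : ∃ w, G.Adj i w ∧ d ≠ w ∧ G.degree w = 1 := by
        by_cases hcase : d = j
        · exact ⟨k, hk, by rw [hcase]; exact hjk, hdk⟩
        · exact ⟨j, hj, hcase, hdj⟩
      obtain ⟨hw0, hwge, hwc⟩ := hx w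
      rw [cn_dep G x hw hww] at hwge
      -- sum over neighbors of i ≥ x d + x w
      have hsub : ({d, w} : Finset (Fin n)) ⊆ G.neighborFinset i := by
        intro a ha
        simp only [Finset.mem_insert, Finset.mem_singleton] at ha
        rcases ha with rfl | rfl <;> simp [hd, hw]
      have hsum : x d + x w ≤ ∑ a ∈ G.neighborFinset i, x a := by
        have := Finset.sum_le_sum_of_subset_of_nonneg hsub
          (fun a _ _ => (hx a).1)
        rwa [Finset.sum_pair hdw] at this
      have : x w ≤ 0 := by
        have : x i + (x d + x w) ≤ estar := by
          rw [← hieq]; unfold cnSum; linarith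
        linarith
      have hw0' : x w = 0 := le_antisymm this hw0
      rw [hw0', zero_add] at hwge
      linarith
    refine ⟨hzero, ?_⟩
    -- x j = 0, so e* ≤ x i; and cnSum i = e* ≥ x i
    have hj0 := hzero j hj hdj
    obtain ⟨_, hjge, _⟩ := hx j
    rw [cn_dep G x hj hdj, hj0, zero_add] at hjge
    have hsumnn : 0 ≤ ∑ a ∈ G.neighborFinset i, x a :=
      Finset.sum_nonneg fun a _ => (hx a).1
    have : x i ≤ estar := by rw [← hieq]; unfold cnSum; linarith
    linarith
end

section
/- If a graph G contains a vertex j of degree 1 whose unique neighbor i has degree at least 2 (i.e., a dependant that is not a co-dependant), then every Nash equilibrium of the public goods game on G has at least one free rider; in particular no distributed equilibrium (with all efforts strictly positive) exists. -/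
/-- If `G` has a dependant that is not a co-dependant (a degree-1 vertex whose
unique neighbour has degree ≥ 2), then every Nash equilibrium has a free
rider; in particular there is no distributed equilibrium. -/
theorem stmt_12 {n : ℕ} (G : SimpleGraph (Fin n)) [DecidableRel G.Adj]
    (estar : ℝ) (he : 0 < estar)
    (i j : Fin n) (hadj : G.Adj j i) (hdj : G.degree j = 1) (hdi : 2 ≤ G.degree i)
    (x : Fin n → ℝ) (hx : IsNE G estar x) :
    ∃ v, x v = 0 := by
  by_contra h
  push_neg at h
  have hpos : ∀ v, 0 < x v := fun v => (hx v).1.lt_of_ne' (h v)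
  have heq : ∀ v, cnSum G x v = estar := by
    intro v
    have := (hx v).2.2
    rcases mul_eq_zero.mp this with h1 | h2
    · exact absurd h1 (h v)
    · linarith [sub_eq_zero.mp h2]
  -- neighborFinset j = {i}
  have hNj : G.neighborFinset j = {i} := by
    have hij : i ∈ G.neighborFinset j := by simpa using hadj
    have hcard : (G.neighborFinset j).card = 1 := by
      rw [← G.card_neighborFinset_eq_degree] at hdj; exact hdj
    exact Finset.eq_singleton_iff_unique_mem.mpr ⟨hij,
      fun y hy => by
        rcases Finset.card_eq_one.mp hcard with ⟨a, ha⟩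
        rw [ha] at hy hij
        simp at hy hij; rw [hy, hij]⟩
  have hj : x j + x i = estar := by
    have := heq j
    rw [cnSum, hNj] at this
    simpa using this
  -- neighbors of i: j plus at least one other
  have hjmem : j ∈ G.neighborFinset i := by simpa using hadj.symm
  have hSne : ((G.neighborFinset i).erase j).Nonempty := by
    rw [← Finset.card_pos, Finset.card_erase_of_mem hjmem,
      G.card_neighborFinset_eq_degree]
    omega
  have hsum : ∑ u ∈ G.neighborFinset i, x u
      = x j + ∑ u ∈ (G.neighborFinset i).erase j, x u :=
    (Finset.add_sum_erase _ _ hjmem).symm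
  have hSpos : 0 < ∑ u ∈ (G.neighborFinset i).erase j, x u :=
    Finset.sum_pos (fun u _ => hpos u) hSne
  have hi := heq i
  rw [cnSum, hsum] at hi
  linarith
end

section
/- If G is a forest and the public goods game on G admits a distributed Nash equilibrium (all efforts strictly positive), then G is a disjoint union of isolated vertices and isolated edges (every connected component has at most 2 vertices). -/
/-- If a forest admits a distributed equilibrium, then it is a disjoint union
of isolated vertices and isolated edges, i.e. every vertex has degree at
most 1. -/
theorem stmt_13 {n : ℕ} (G : SimpleGraph (Fin n)) [DecidableRel G.Adj]
    (hG : G.IsAcyclic) (estar : ℝ) (he : 0 < estar)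
    (x : Fin n → ℝ) (hx : IsNE G estar x) (hdist : ∀ v, 0 < x v) :
    ∀ v, G.degree v ≤ 1 := by
  classical
  -- closed neighbourhood sums all equal estar
  have hcn : ∀ i, cnSum G x i = estar := by
    intro i
    obtain ⟨h0, h1, h2⟩ := hx i
    rcases mul_eq_zero.mp h2 with h | h
    · exact absurd h (hdist i).ne'
    · have := sub_eq_zero.mp h; linarith
  -- degree ≥ 2 propagates along edges
  have prop : ∀ a v : Fin n, G.Adj a v → 2 ≤ G.degree v → 2 ≤ G.degree a := by
    intro a v hav hdv
    have ha : a ∈ G.neighborFinset v := by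
      simp [SimpleGraph.mem_neighborFinset]; exact hav.symm
    have hdv' : 1 < (G.neighborFinset v).card := hdv
    obtain ⟨b, hb, hba⟩ := Finset.exists_mem_ne hdv' a
    -- S_v ≥ x a + x b
    have hsub : ({a, b} : Finset (Fin n)) ⊆ G.neighborFinset v := by
      intro c hc
      rcases Finset.mem_insert.mp hc with rfl | hc
      · exact ha
      · rw [Finset.mem_singleton.mp hc]; exact hb
    have hpair : x a + x b ≤ ∑ w ∈ G.neighborFinset v, x w := by
      have := Finset.sum_le_sum_of_subset_of_nonneg hsub
        (fun c _ _ => (hdist c).le)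
      rwa [Finset.sum_pair hba.symm] at this
    -- rewrite S_a using v ∈ N(a)
    have hv : v ∈ G.neighborFinset a := by
      simp [SimpleGraph.mem_neighborFinset]; exact hav
    have hsplit : ∑ w ∈ G.neighborFinset a, x w
        = x v + ∑ w ∈ (G.neighborFinset a).erase v, x w :=
      (Finset.add_sum_erase _ _ hv).symm
    have hcnv := hcn v
    have hcna := hcn a
    unfold cnSum at hcnv hcna
    have hpos : 0 < ∑ w ∈ (G.neighborFinset a).erase v, x w := by
      have hxb := hdist b
      nlinarith
    -- so N(a) \ {v} is nonempty
    obtain ⟨z, hz⟩ : ∃ z, z ∈ (G.neighborFinset a).erase v := by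
      by_contra hempty
      push_neg at hempty
      have : ((G.neighborFinset a).erase v) = ∅ := Finset.eq_empty_of_forall_notMem hempty
      rw [this, Finset.sum_empty] at hpos
      exact lt_irrefl _ hpos
    have hzv : z ≠ v := (Finset.mem_erase.mp hz).1
    have hzN : z ∈ G.neighborFinset a := (Finset.mem_erase.mp hz).2
    have hsub2 : ({z, v} : Finset (Fin n)) ⊆ G.neighborFinset a := by
      intro c hc
      rcases Finset.mem_insert.mp hc with rfl | hc
      · exact hzN
      · rw [Finset.mem_singleton.mp hc]; exact hv
    calc (2 : ℕ) = ({z, v} : Finset (Fin n)).card := by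
            rw [Finset.card_insert_of_notMem (by simpa using hzv),
              Finset.card_singleton]
      _ ≤ (G.neighborFinset a).card := Finset.card_le_card hsub2
  -- main argument
  intro v
  by_contra hv
  push_neg at hv
  have hv2 : 2 ≤ G.degree v := hv
  -- build arbitrarily long paths
  have key : ∀ k : ℕ, ∃ (u w : Fin n) (p : G.Walk u w),
      p.IsPath ∧ p.length = k ∧ 2 ≤ G.degree u := by
    intro k
    induction k with
    | zero => exact ⟨v, v, SimpleGraph.Walk.nil, by simp, rfl, hv2⟩
    | succ k ih =>
      obtain ⟨u, w, p, hp, hl, hd⟩ := ih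
      -- any neighbour of u lying on p is the second vertex of p
      have huniq : ∀ z1 z2 : Fin n, G.Adj u z1 → G.Adj u z2 →
          z1 ∈ p.support → z2 ∈ p.support → z1 = z2 := by
        have main : ∀ z : Fin n, (h : G.Adj u z) → (hz : z ∈ p.support) →
            ∃ t : List (Fin n), p.support = u :: z :: t := by
          intro z h hz
          have hq : (p.takeUntil z hz).IsPath := hp.takeUntil hz
          have hpath_eq : (⟨p.takeUntil z hz, hq⟩ : G.Path u z)
              = SimpleGraph.Path.singleton h :=
            SimpleGraph.isAcyclic_iff_path_unique.mp hG _ _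
          have hqe : p.takeUntil z hz = SimpleGraph.Walk.cons h SimpleGraph.Walk.nil := by
            have := congrArg Subtype.val hpath_eq
            simpa [SimpleGraph.Path.singleton] using this
          have hspec := (p.take_spec hz).symm
          rw [hqe] at hspec
          have : p = SimpleGraph.Walk.cons h (p.dropUntil z hz) := by
            simpa using hspec
          have hsupp := congrArg SimpleGraph.Walk.support this
          rw [SimpleGraph.Walk.support_cons] at hsupp
          refine ⟨(p.dropUntil z hz).support.tail, ?_⟩
          rw [hsupp, SimpleGraph.Walk.support_eq_cons]
          rfl
        intro z1 z2 h1 h2 hz1 hz2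
        obtain ⟨t1, ht1⟩ := main z1 h1 hz1
        obtain ⟨t2, ht2⟩ := main z2 h2 hz2
        rw [ht1] at ht2
        simp only [List.cons.injEq] at ht2
        exact ht2.2.1
      -- get two distinct neighbours of u; one avoids p
      have hd' : 1 < (G.neighborFinset u).card := hd
      obtain ⟨z1, hz1, z2, hz2, hz12⟩ := Finset.one_lt_card.mp hd'
      have ha1 : G.Adj u z1 := by simpa using hz1
      have ha2 : G.Adj u z2 := by simpa using hz2
      obtain ⟨z, haz, hznot⟩ : ∃ z, G.Adj u z ∧ z ∉ p.support := by
        by_cases h1 : z1 ∈ p.support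
        · by_cases h2 : z2 ∈ p.support
          · exact absurd (huniq z1 z2 ha1 ha2 h1 h2) hz12
          · exact ⟨z2, ha2, h2⟩
        · exact ⟨z1, ha1, h1⟩
      refine ⟨z, w, SimpleGraph.Walk.cons haz.symm p, ?_, by simp [hl], prop z u haz.symm hd⟩
      rw [SimpleGraph.Walk.cons_isPath_iff]
      exact ⟨hp, hznot⟩
  obtain ⟨u, w, p, hp, hl, _⟩ := key n
  have := hp.length_lt
  rw [hl, Fintype.card_fin] at this
  exact lt_irrefl _ this
end

section
/- If G is a forest and x is a Nash equilibrium of the public goods game, then every supporting agent (x_i > 0) is either a specialist (x_i = e*) or a co-specialist, i.e., has a neighbor j with x_j > 0 and x_i + x_j = e*. -/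
section Aux

open SimpleGraph

variable {n : ℕ} {G : SimpleGraph (Fin n)} [DecidableRel G.Adj]

/-- In an acyclic graph, extending a path by an edge and then stepping to a new
neighbor distinct from the previous vertex lands outside the extended path. -/
lemma pg_concat_not_mem (hG : G.IsAcyclic) {a u v w : Fin n} (p : G.Walk a u) (hp : p.IsPath)
    (h : G.Adj u v) (hv : v ∉ p.support) (hw : G.Adj v w) (hwu : w ≠ u) :
    w ∉ (p.concat h).support := by
  classical
  intro hmem
  rw [Walk.support_concat, List.mem_append] at hmem
  have hwv : w ≠ v := fun e => (G.irrefl (e ▸ hw))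
  have hwp : w ∈ p.support := by
    rcases hmem with h1 | h1
    · exact h1
    · simp at h1; exact absurd h1 hwv
  have hq : ((p.dropUntil w hwp).concat h).IsPath := by
    rw [Walk.isPath_def, Walk.support_concat]
    refine List.Nodup.append ((hp.dropUntil hwp).support_nodup) (List.nodup_singleton v) ?_
    intro a ha hb
    simp at hb; subst hb
    exact hv (Walk.support_dropUntil_subset _ _ ha)
  have hcyc : (Walk.cons hw ((p.dropUntil w hwp).concat h)).IsCycle := by
    rw [Walk.cons_isCycle_iff]
    refine ⟨hq, ?_⟩
    rw [Walk.edges_concat, List.concat_eq_append, List.mem_append]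
    rintro (h1 | h1)
    · exact hv (Walk.fst_mem_support_of_mem_edges p (Walk.edges_dropUntil_subset _ _ h1))
    · simp only [List.mem_singleton, Sym2.eq, Sym2.rel_iff', Prod.mk.injEq,
        Prod.swap_prod_mk] at h1
      rcases h1 with ⟨-, e⟩ | ⟨-, e⟩
      · exact hwv e
      · exact hwu e
  exact hG _ hcyc

variable {estar : ℝ} {x : Fin n → ℝ}

lemma pg_cnSum_eq (hx : IsNE G estar x) {v : Fin n} (hv : 0 < x v) :
    cnSum G x v = estar := by
  rcases mul_eq_zero.mp (hx v).2.2 with h | h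
  · exact absurd h (ne_of_gt hv)
  · linarith
lemma pg_pair_le (hx : IsNE G estar x) {a b : Fin n} (hab : G.Adj a b) (hb : 0 < x b) :
    x a + x b ≤ estar := by
  have hmem : a ∈ G.neighborFinset b := by
    rw [mem_neighborFinset]; exact hab.symm
  have h1 : x a ≤ ∑ j ∈ G.neighborFinset b, x j :=
    Finset.single_le_sum (fun j _ => (hx j).1) hmem
  have := pg_cnSum_eq hx hb
  rw [cnSum] at this
  linarith

/-- The chain-extension step. -/
lemma pg_step (hx : IsNE G estar x) {u v : Fin n} (h : G.Adj u v)
    (hu : 0 < x u) (hv : 0 < x v) (hlt : x u + x v < estar) :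
    ∃ w, G.Adj v w ∧ w ≠ u ∧ 0 < x w ∧ x v + x w < estar := by
  classical
  have hsv : cnSum G x v = estar := pg_cnSum_eq hx hv
  rw [cnSum] at hsv
  have hmem : u ∈ G.neighborFinset v := by
    rw [mem_neighborFinset]; exact h.symm
  have hsplit : ∑ j ∈ G.neighborFinset v, x j
      = x u + ∑ j ∈ (G.neighborFinset v).erase u, x j :=
    (Finset.add_sum_erase _ _ hmem).symm
  have hpos : 0 < ∑ j ∈ (G.neighborFinset v).erase u, x j := by linarith
  have hex : ∃ w ∈ (G.neighborFinset v).erase u, 0 < x w := by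
    by_contra hc
    push_neg at hc
    have : ∑ j ∈ (G.neighborFinset v).erase u, x j ≤ 0 :=
      Finset.sum_nonpos fun j hj => hc j hj
    linarith
  obtain ⟨w, hwmem, hw⟩ := hex
  have hwu : w ≠ u := (Finset.mem_erase.mp hwmem).1
  have hadj : G.Adj v w := (mem_neighborFinset _ _ _).mp (Finset.mem_erase.mp hwmem).2
  have hle : x w ≤ ∑ j ∈ (G.neighborFinset v).erase u, x j :=
    Finset.single_le_sum (fun j _ => (hx j).1) hwmem
  exact ⟨w, hadj, hwu, hw, by linarith⟩

/-- No infinite chain: in a forest there is no path ending in an edge `u v` of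
supporting agents with `x u + x v < e*`. -/
lemma pg_no_chain (hG : G.IsAcyclic) (hx : IsNE G estar x) (i : Fin n) :
    ∀ (k : ℕ) (u v : Fin n) (p : G.Walk i u), p.IsPath → n - p.length ≤ k →
      ∀ _ : G.Adj u v, v ∉ p.support → 0 < x u → 0 < x v → x u + x v < estar → False := by
  intro k
  induction k with
  | zero =>
    intro u v p hp hk _ _ _ _ _
    have := hp.length_lt
    rw [Fintype.card_fin] at this
    omega
  | succ k ih =>
    intro u v p hp hk h hvp hu hv hlt
    obtain ⟨w, hvw, hwu, hw, hlt'⟩ := pg_step hx h hu hv hlt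
    have hp' : (p.concat h).IsPath := by
      rw [Walk.isPath_def, Walk.support_concat]
      refine List.Nodup.append hp.support_nodup (List.nodup_singleton v) ?_
      intro a ha hb
      simp at hb; subst hb; exact hvp ha
    have hlen : p.length < n := by
      have := hp.length_lt
      rwa [Fintype.card_fin] at this
    refine ih v w (p.concat h) hp' ?_ hvw
      (pg_concat_not_mem hG p hp h hvp hvw hwu) hv hw hlt'
    rw [Walk.length_concat]
    omega

end Aux

/-- In a forest, every supporting agent at equilibrium is either a specialist
or a co-specialist. -/
theorem stmt_14 {n : ℕ} (G : SimpleGraph (Fin n)) [DecidableRel G.Adj]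
    (hG : G.IsAcyclic) (estar : ℝ) (he : 0 < estar)
    (x : Fin n → ℝ) (hx : IsNE G estar x) (i : Fin n) (hi : 0 < x i) :
    x i = estar ∨ ∃ j, G.Adj i j ∧ 0 < x j ∧ x i + x j = estar := by
  classical
  by_contra hcon
  push_neg at hcon
  obtain ⟨hne, hco⟩ := hcon
  have hsi : cnSum G x i = estar := pg_cnSum_eq hx hi
  rw [cnSum] at hsi
  have hxile : x i < estar := by
    have hnn : 0 ≤ ∑ j ∈ G.neighborFinset i, x j :=
      Finset.sum_nonneg fun j _ => (hx j).1
    rcases lt_or_eq_of_le (by linarith : x i ≤ estar) with h | h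
    · exact h
    · exact absurd h hne
  have hpos : 0 < ∑ j ∈ G.neighborFinset i, x j := by linarith
  have hex : ∃ j ∈ G.neighborFinset i, 0 < x j := by
    by_contra hc
    push_neg at hc
    have : ∑ j ∈ G.neighborFinset i, x j ≤ 0 := Finset.sum_nonpos fun j hj => hc j hj
    linarith
  obtain ⟨j, hjmem, hj⟩ := hex
  have hadj : G.Adj i j := (SimpleGraph.mem_neighborFinset _ _ _).mp hjmem
  have hle : x i + x j ≤ estar := pg_pair_le hx hadj hj
  have hlt : x i + x j < estar := lt_of_le_of_ne hle (hco j hadj hj)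
  exact pg_no_chain hG hx i n i j SimpleGraph.Walk.nil (SimpleGraph.Walk.IsPath.nil)
    (by simp) hadj (by simp [hadj.ne']) hi hj hlt
end

section
/- If G is a forest and x is a non-specialized Nash equilibrium, then there exists a specialized Nash equilibrium y (each y_i ∈ {0, e*}) with supp(y) ⊆ supp(x) and equal total effort: ∑_i y_i = ∑_i x_i. -/
section Aux

variable {n : ℕ}

/-- The graph obtained from `G` by removing all edges incident to `S`. -/
def cutG (G : SimpleGraph (Fin n)) (S : Finset (Fin n)) : SimpleGraph (Fin n) where
  Adj a b := G.Adj a b ∧ a ∉ S ∧ b ∉ S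
  symm := ⟨by
    intro a b h
    exact ⟨h.1.symm, h.2.2, h.2.1⟩⟩
  loopless := ⟨fun a h => G.loopless.irrefl a h.1⟩

lemma cutG_adj (G : SimpleGraph (Fin n)) (S : Finset (Fin n)) (a b : Fin n) :
    (cutG G S).Adj a b ↔ G.Adj a b ∧ a ∉ S ∧ b ∉ S := Iff.rfl

instance cutG_decAdj (G : SimpleGraph (Fin n)) [DecidableRel G.Adj] (S : Finset (Fin n)) :
    DecidableRel (cutG G S).Adj := fun a b =>
  inferInstanceAs (Decidable (G.Adj a b ∧ a ∉ S ∧ b ∉ S))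

lemma cutG_le (G : SimpleGraph (Fin n)) (S : Finset (Fin n)) : cutG G S ≤ G :=
  fun _ _ h => h.1

lemma isAcyclic_mono {V : Type*} {G H : SimpleGraph V} (hle : H ≤ G) (hac : G.IsAcyclic) :
    H.IsAcyclic := fun _ c hc => hac (c.mapLe hle) (hc.mapLe hle)

/-- The closed neighbourhood sum is unchanged by cutting `S`, for `i ∉ S`,
provided the removed neighbours all had value `0`. -/
lemma cnSum_cut (G : SimpleGraph (Fin n)) [DecidableRel G.Adj] (S : Finset (Fin n))
    (x x' : Fin n → ℝ) (i : Fin n) (hi : i ∉ S)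
    (hagree : ∀ j, j ∉ S → x' j = x j)
    (hzero : ∀ j ∈ S, G.Adj i j → x j = 0) :
    cnSum (cutG G S) x' i = cnSum G x i := by
  unfold cnSum
  rw [hagree i hi]
  congr 1
  have hsub : (cutG G S).neighborFinset i ⊆ G.neighborFinset i := by
    intro j hj
    rw [SimpleGraph.mem_neighborFinset] at *
    exact hj.1
  have h1 : ∑ j ∈ (cutG G S).neighborFinset i, x' j
      = ∑ j ∈ (cutG G S).neighborFinset i, x j := by
    apply Finset.sum_congr rfl
    intro j hj
    rw [SimpleGraph.mem_neighborFinset] at hj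
    exact hagree j hj.2.2
  rw [h1]
  apply Finset.sum_subset hsub
  intro j hjG hjc
  rw [SimpleGraph.mem_neighborFinset] at hjG hjc
  rw [cutG_adj] at hjc
  push_neg at hjc
  exact hzero j (hjc hjG hi) hjG

lemma sum_update (f : Fin n → ℝ) (u : Fin n) (c : ℝ) :
    ∑ i, Function.update f u c i = c + (∑ i, f i - f u) := by
  rw [Finset.sum_update_of_mem (Finset.mem_univ u), Finset.sdiff_singleton_eq_erase]
  have h := Finset.add_sum_erase Finset.univ f (Finset.mem_univ u)
  linarith

/-- A finite acyclic graph with an edge has a leaf. -/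
lemma exists_leaf (G : SimpleGraph (Fin n)) [DecidableRel G.Adj] (hac : G.IsAcyclic)
    {a b : Fin n} (hab : G.Adj a b) :
    ∃ u w, G.Adj u w ∧ ∀ z, G.Adj u z → z = w := by
  classical
  set P : ℕ → Prop := fun L => ∃ (u v : Fin n) (p : G.Walk u v), p.IsPath ∧ p.length = L with hP
  have hP1 : P 1 := by
    refine ⟨a, b, SimpleGraph.Walk.cons hab SimpleGraph.Walk.nil, ?_, rfl⟩
    rw [SimpleGraph.Walk.cons_isPath_iff]
    refine ⟨SimpleGraph.Walk.IsPath.nil, ?_⟩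
    simp [hab.ne]
  have hbound : ∀ L, P L → L ≤ n := by
    rintro L ⟨u, v, p, hp, hlen⟩
    have := hp.length_lt
    rw [Fintype.card_fin] at this
    omega
  have hn1 : 1 ≤ n := hbound 1 hP1
  have hPL : P (Nat.findGreatest P n) := Nat.findGreatest_spec hn1 hP1
  have hL1 : 1 ≤ Nat.findGreatest P n := Nat.le_findGreatest hn1 hP1
  obtain ⟨u, v, p, hp, hlen⟩ := hPL
  have hlpos : 0 < p.length := by omega
  refine ⟨u, p.getVert 1, ?_, ?_⟩
  · have := p.adj_getVert_succ hlpos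
    rwa [p.getVert_zero] at this
  intro z hz
  by_contra hzw
  by_cases hzs : z ∈ p.support
  · -- z on the path: path uniqueness forces z to be the second vertex
    have hq1 : (p.takeUntil z hzs).IsPath := hp.takeUntil hzs
    have hq2 : (SimpleGraph.Walk.cons hz SimpleGraph.Walk.nil).IsPath := by
      rw [SimpleGraph.Walk.cons_isPath_iff]
      refine ⟨SimpleGraph.Walk.IsPath.nil, ?_⟩
      simp [hz.ne]
    have hpe : (⟨p.takeUntil z hzs, hq1⟩ : G.Path u z)
        = ⟨SimpleGraph.Walk.cons hz SimpleGraph.Walk.nil, hq2⟩ := hac.path_unique _ _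
    have heq : p.takeUntil z hzs = SimpleGraph.Walk.cons hz SimpleGraph.Walk.nil :=
      congrArg Subtype.val hpe
    have hspec := p.take_spec hzs
    have hgv : p.getVert 1 = z := by
      conv_lhs => rw [← hspec, heq]
      rw [SimpleGraph.Walk.cons_append, SimpleGraph.Walk.getVert_cons_succ,
        SimpleGraph.Walk.nil_append, SimpleGraph.Walk.getVert_zero]
    exact hzw hgv.symm
  · -- z off the path: extend the path, contradicting maximality
    have hp2 : (SimpleGraph.Walk.cons hz.symm p).IsPath := hp.cons hzs
    have hle : p.length + 1 ≤ n := by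
      have := hp2.length_lt
      rw [Fintype.card_fin] at this
      simp only [SimpleGraph.Walk.length_cons] at this
      omega
    exact Nat.findGreatest_is_greatest (P := P) (n := n)
      (k := Nat.findGreatest P n + 1) (by omega) (by omega)
      ⟨z, v, SimpleGraph.Walk.cons hz.symm p, hp2, by
        simp [SimpleGraph.Walk.length_cons, hlen]⟩

/-- Generalized equilibrium: vertices in `R` are forced to `0` effort and have
no constraint on their neighbourhood sum. -/
def GenNE (G : SimpleGraph (Fin n)) [DecidableRel G.Adj] (estar : ℝ)
    (R : Finset (Fin n)) (x : Fin n → ℝ) : Prop :=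
  ∀ i, 0 ≤ x i ∧ (i ∈ R → x i = 0) ∧
    (i ∉ R → estar ≤ cnSum G x i ∧ x i * (cnSum G x i - estar) = 0)

lemma key (estar : ℝ) (he : 0 < estar) (k : ℕ) :
    ∀ (G : SimpleGraph (Fin n)) [DecidableRel G.Adj],
      G.edgeSet.ncard ≤ k → G.IsAcyclic →
      ∀ (R : Finset (Fin n)) (x : Fin n → ℝ), GenNE G estar R x →
      ∃ y, GenNE G estar R y ∧ (∀ i, y i = 0 ∨ y i = estar) ∧
        (∀ i, y i ≠ 0 → x i ≠ 0) ∧ ∑ i, y i = ∑ i, x i := by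
  induction k with
  | zero =>
    intro G inst hcard hac R x hx
    have hempty : G.edgeSet = ∅ := by
      rw [← Set.ncard_eq_zero (Set.toFinite _)]
      omega
    have hnoadj : ∀ i j : Fin n, ¬ G.Adj i j := by
      intro i j hadj
      have h1 : s(i, j) ∈ G.edgeSet := hadj
      rw [hempty] at h1
      exact h1
    have hcn : ∀ i, cnSum G x i = x i := by
      intro i
      unfold cnSum
      have h2 : G.neighborFinset i = ∅ := by
        apply Finset.eq_empty_of_forall_notMem
        intro j hj
        exact hnoadj i j ((SimpleGraph.mem_neighborFinset G i j).mp hj)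
      rw [h2]
      simp
    refine ⟨x, hx, ?_, fun i h => h, rfl⟩
    intro i
    rcases hx i with ⟨h0, hR, hNR⟩
    by_cases hiR : i ∈ R
    · exact Or.inl (hR hiR)
    · right
      obtain ⟨hge, hprod⟩ := hNR hiR
      rw [hcn] at hge hprod
      rcases mul_eq_zero.mp hprod with h | h
      · linarith
      · linarith
  | succ k ih =>
    intro G inst hcard hac R x hx
    by_cases hsmall : G.edgeSet.ncard ≤ k
    · exact ih G hsmall hac R x hx
    have hnonempty : G.edgeSet.Nonempty := by
      apply Set.nonempty_of_ncard_ne_zero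
      omega
    by_cases hcase1 : ∃ a ∈ R, ∃ b, G.Adj a b
    · -- Case 1: cut an R-vertex with an edge
      obtain ⟨a, haR, b, hab⟩ := hcase1
      have hxa : x a = 0 := (hx a).2.1 haR
      have hssub : (cutG G {a}).edgeSet ⊂ G.edgeSet := by
        constructor
        · exact SimpleGraph.edgeSet_mono (cutG_le G {a})
        · intro hsub
          have h1 : s(a, b) ∈ G.edgeSet := hab
          have h2 := hsub h1
          rw [SimpleGraph.mem_edgeSet, cutG_adj] at h2
          simp at h2
      have hcard' : (cutG G {a}).edgeSet.ncard ≤ k := by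
        have := Set.ncard_lt_ncard hssub (Set.toFinite _)
        omega
      have hac' : (cutG G {a}).IsAcyclic := isAcyclic_mono (cutG_le G {a}) hac
      have hx' : GenNE (cutG G {a}) estar R x := by
        intro i
        rcases hx i with ⟨h0, hR, hNR⟩
        refine ⟨h0, hR, fun hiR => ?_⟩
        have hia : i ∉ ({a} : Finset (Fin n)) := by
          simp only [Finset.mem_singleton]
          rintro rfl
          exact hiR haR
        rw [cnSum_cut G {a} x x i hia (fun _ _ => rfl)
          (fun j hj _ => by rw [Finset.mem_singleton] at hj; rw [hj]; exact hxa)]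
        exact hNR hiR
      obtain ⟨y, hy, hspec, hsupp, hsum⟩ :=
        ih (cutG G {a}) hcard' hac' R x hx'
      refine ⟨y, ?_, hspec, hsupp, hsum⟩
      intro i
      rcases hy i with ⟨h0, hR, hNR⟩
      refine ⟨h0, hR, fun hiR => ?_⟩
      have hia : i ∉ ({a} : Finset (Fin n)) := by
        simp only [Finset.mem_singleton]
        rintro rfl
        exact hiR haR
      have hya : y a = 0 := (hy a).2.1 haR
      rw [← cnSum_cut G {a} y y i hia (fun _ _ => rfl)
        (fun j hj _ => by rw [Finset.mem_singleton] at hj; rw [hj]; exact hya)]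
      exact hNR hiR
    · -- no edges touch R; find a leaf edge u-w
      push_neg at hcase1
      obtain ⟨e, he'⟩ := hnonempty
      have hedge : ∃ a b : Fin n, G.Adj a b := by
        induction e using Sym2.ind with
        | _ a b => exact ⟨a, b, he'⟩
      obtain ⟨a0, b0, hab0⟩ := hedge
      obtain ⟨u, w, huw, huniq⟩ := exists_leaf G hac hab0
      have hnbu : G.neighborFinset u = {w} := by
        ext z
        rw [SimpleGraph.mem_neighborFinset, Finset.mem_singleton]
        exact ⟨fun h => huniq z h, fun h => h ▸ huw⟩
      have huR : u ∉ R := fun h => hcase1 u h w huw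
      have hwR : w ∉ R := fun h => hcase1 w h u huw.symm
      have huw' : u ≠ w := huw.ne
      have hcnu : cnSum G x u = x u + x w := by
        unfold cnSum
        rw [hnbu, Finset.sum_singleton]
      obtain ⟨hu0, -, hNRu⟩ := hx u
      obtain ⟨hw0, -, hNRw⟩ := hx w
      obtain ⟨hge_u, hprod_u⟩ := hNRu huR
      obtain ⟨hge_w, hprod_w⟩ := hNRw hwR
      rw [hcnu] at hge_u hprod_u
      have humem : u ∈ G.neighborFinset w := by
        rw [SimpleGraph.mem_neighborFinset]; exact huw.symm
      have hcnw_ge : x w + x u ≤ cnSum G x w := by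
        unfold cnSum
        have := Finset.single_le_sum (f := x) (fun j _ => (hx j).1) humem
        linarith
      have hnotadj_u : ∀ i, i ≠ w → ¬ G.Adj i u := fun i hiw hadj => hiw (huniq i hadj.symm)
      have hkey : x u + x w = estar := by
        by_cases hxu : x u = 0
        · have hxw_pos : 0 < x w := by rw [hxu] at hge_u; linarith
          have h1 : cnSum G x w = estar := by
            rcases mul_eq_zero.mp hprod_w with h | h
            · linarith
            · linarith
          rw [hxu] at hcnw_ge hge_u ⊢
          linarith
        · rcases mul_eq_zero.mp hprod_u with h | h
          · exact absurd h hxu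
          · linarith
      by_cases hxw : x w = 0
      · -- Case C: leaf u carries all the effort
        have hxu_e : x u = estar := by linarith
        have hssub : (cutG G {u}).edgeSet ⊂ G.edgeSet := by
          constructor
          · exact SimpleGraph.edgeSet_mono (cutG_le G {u})
          · intro hsub
            have h1 : s(u, w) ∈ G.edgeSet := huw
            have h2 := hsub h1
            rw [SimpleGraph.mem_edgeSet, cutG_adj] at h2
            simp at h2
        have hcard' : (cutG G {u}).edgeSet.ncard ≤ k := by
          have := Set.ncard_lt_ncard hssub (Set.toFinite _)
          omega
        have hac' : (cutG G {u}).IsAcyclic := isAcyclic_mono (cutG_le G {u}) hac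
        set R' : Finset (Fin n) := insert u (insert w R) with hR'
        set x' : Fin n → ℝ := Function.update x u 0 with hx'def
        have hx'u : x' u = 0 := Function.update_self u 0 x
        have hx'ne : ∀ j, j ≠ u → x' j = x j := fun j hj => Function.update_of_ne hj 0 x
        have hgen' : GenNE (cutG G {u}) estar R' x' := by
          intro i
          have h0 : 0 ≤ x' i := by
            by_cases hiu : i = u
            · subst i; exact le_of_eq hx'u.symm
            · rw [hx'ne i hiu]; exact (hx i).1
          refine ⟨h0, ?_, ?_⟩
          · intro hiR'
            by_cases hiu : i = u
            · subst i; exact hx'u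
            · rw [hx'ne i hiu]
              rw [hR', Finset.mem_insert, Finset.mem_insert] at hiR'
              rcases hiR' with h | h | h
              · exact absurd h hiu
              · rw [h]; exact hxw
              · exact (hx i).2.1 h
          · intro hiR'
            have hiu : i ≠ u := fun h => hiR' (by rw [hR', h]; exact Finset.mem_insert_self u _)
            have hiw : i ≠ w := fun h => hiR' (by
              rw [hR', h]; exact Finset.mem_insert_of_mem (Finset.mem_insert_self w R))
            have hiRold : i ∉ R := fun h => hiR' (by
              rw [hR']; exact Finset.mem_insert_of_mem (Finset.mem_insert_of_mem h))
            have hiS : i ∉ ({u} : Finset (Fin n)) := by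
              rw [Finset.mem_singleton]; exact hiu
            have heq : cnSum (cutG G {u}) x' i = cnSum G x i := by
              apply cnSum_cut G {u} x x' i hiS
              · intro j hj
                rw [Finset.mem_singleton] at hj
                exact hx'ne j hj
              · intro j hj hadj
                rw [Finset.mem_singleton] at hj
                subst j
                exact absurd hadj (hnotadj_u i hiw)
            rw [heq, hx'ne i hiu]
            exact (hx i).2.2 hiRold
        obtain ⟨y', hy', hspec', hsupp', hsum'⟩ :=
          ih (cutG G {u}) hcard' hac' R' x' hgen'
        have hy'u : y' u = 0 := (hy' u).2.1 (by rw [hR']; exact Finset.mem_insert_self u _)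
        have hy'w : y' w = 0 := (hy' w).2.1 (by
          rw [hR']; exact Finset.mem_insert_of_mem (Finset.mem_insert_self w R))
        set y : Fin n → ℝ := Function.update y' u estar with hydef
        have hyu : y u = estar := Function.update_self u estar y'
        have hyne : ∀ j, j ≠ u → y j = y' j := fun j hj => Function.update_of_ne hj estar y'
        have hynn : ∀ j, 0 ≤ y j := by
          intro j
          by_cases hj : j = u
          · subst j; rw [hyu]; linarith
          · rw [hyne j hj]; exact (hy' j).1
        refine ⟨y, ?_, ?_, ?_, ?_⟩
        · intro i
          refine ⟨hynn i, ?_, ?_⟩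
          · intro hiR
            have hiu : i ≠ u := fun h => huR (h ▸ hiR)
            rw [hyne i hiu]
            exact (hy' i).2.1 (by
              rw [hR']; exact Finset.mem_insert_of_mem (Finset.mem_insert_of_mem hiR))
          · intro hiR
            by_cases hiu : i = u
            · subst i
              have hcny : cnSum G y u = estar := by
                unfold cnSum
                rw [hnbu, Finset.sum_singleton, hyu, hyne w (Ne.symm huw'), hy'w]
                ring
              exact ⟨le_of_eq hcny.symm, by rw [hcny]; ring⟩
            by_cases hiw : i = w
            · subst i
              have hyw0 : y w = 0 := by rw [hyne w (Ne.symm huw'), hy'w]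
              have hge : estar ≤ cnSum G y w := by
                unfold cnSum
                have h1 := Finset.single_le_sum (f := y) (fun j _ => hynn j) humem
                rw [hyu] at h1
                linarith [hynn w]
              exact ⟨hge, by rw [hyw0]; ring⟩
            · have hiS : i ∉ ({u} : Finset (Fin n)) := by
                rw [Finset.mem_singleton]; exact hiu
              have heq : cnSum (cutG G {u}) y' i = cnSum G y i := by
                apply cnSum_cut G {u} y y' i hiS
                · intro j hj
                  rw [Finset.mem_singleton] at hj
                  exact (hyne j hj).symm
                · intro j hj hadj
                  rw [Finset.mem_singleton] at hj
                  subst j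
                  exact absurd hadj (hnotadj_u i hiw)
              have hiR' : i ∉ R' := by
                rw [hR', Finset.mem_insert, Finset.mem_insert]
                push_neg
                exact ⟨hiu, hiw, hiR⟩
              rw [← heq, hyne i hiu]
              exact (hy' i).2.2 hiR'
        · intro i
          by_cases hiu : i = u
          · subst i; right; exact hyu
          · rw [hyne i hiu]; exact hspec' i
        · intro i hyne0
          by_cases hiu : i = u
          · subst i; rw [hxu_e]; exact he.ne'
          · rw [hyne i hiu] at hyne0
            have := hsupp' i hyne0
            rw [hx'ne i hiu] at this
            exact this
        · rw [hydef, sum_update, hsum', hx'def, sum_update, hy'u, hxu_e]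
          ring
      · -- Case B: interior vertex w carries the effort
        have hxw_pos : 0 < x w := lt_of_le_of_ne hw0 (Ne.symm hxw)
        have hcnw : cnSum G x w = estar := by
          rcases mul_eq_zero.mp hprod_w with h | h
          · exact absurd h hxw
          · linarith
        have hnbsum : ∑ j ∈ G.neighborFinset w, x j = x u := by
          unfold cnSum at hcnw
          linarith
        have hzero_nb : ∀ j ∈ G.neighborFinset w, j ≠ u → x j = 0 := by
          have h2 : ∑ j ∈ (G.neighborFinset w).erase u, x j = 0 := by
            have h3 := Finset.add_sum_erase (G.neighborFinset w) x humem
            linarith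
          intro j hj hju
          exact (Finset.sum_eq_zero_iff_of_nonneg (fun j _ => (hx j).1)).mp h2 j
            (Finset.mem_erase.mpr ⟨hju, hj⟩)
        set S : Finset (Fin n) := {u, w} with hSdef
        have huS : u ∈ S := by rw [hSdef]; exact Finset.mem_insert_self u _
        have hwS : w ∈ S := by rw [hSdef]; exact Finset.mem_insert_of_mem (Finset.mem_singleton_self w)
        have hssub : (cutG G S).edgeSet ⊂ G.edgeSet := by
          constructor
          · exact SimpleGraph.edgeSet_mono (cutG_le G S)
          · intro hsub
            have h1 : s(u, w) ∈ G.edgeSet := huw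
            have h2 := hsub h1
            rw [SimpleGraph.mem_edgeSet, cutG_adj] at h2
            exact h2.2.1 huS
        have hcard' : (cutG G S).edgeSet.ncard ≤ k := by
          have := Set.ncard_lt_ncard hssub (Set.toFinite _)
          omega
        have hac' : (cutG G S).IsAcyclic := isAcyclic_mono (cutG_le G S) hac
        set R' : Finset (Fin n) := insert u (insert w (R ∪ G.neighborFinset w)) with hR'
        have hmemR' : ∀ i, i ∈ R' ↔ i = u ∨ i = w ∨ i ∈ R ∨ i ∈ G.neighborFinset w := by
          intro i
          rw [hR', Finset.mem_insert, Finset.mem_insert, Finset.mem_union]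
        set x' : Fin n → ℝ := Function.update (Function.update x u 0) w 0 with hx'def
        have hx'u : x' u = 0 := by
          rw [hx'def, Function.update_of_ne huw' 0 _, Function.update_self]
        have hx'w : x' w = 0 := Function.update_self w 0 _
        have hx'ne : ∀ j, j ≠ u → j ≠ w → x' j = x j := fun j hju hjw => by
          rw [hx'def, Function.update_of_ne hjw 0 _, Function.update_of_ne hju 0 x]
        have hnotadj_w : ∀ i, i ∉ G.neighborFinset w → ¬ G.Adj i w := by
          intro i hi hadj
          exact hi (by rw [SimpleGraph.mem_neighborFinset]; exact hadj.symm)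
        have hgen' : GenNE (cutG G S) estar R' x' := by
          intro i
          have h0 : 0 ≤ x' i := by
            by_cases hiu : i = u
            · subst i; exact le_of_eq hx'u.symm
            by_cases hiw : i = w
            · subst i; exact le_of_eq hx'w.symm
            · rw [hx'ne i hiu hiw]; exact (hx i).1
          refine ⟨h0, ?_, ?_⟩
          · intro hiR'
            by_cases hiu : i = u
            · subst i; exact hx'u
            by_cases hiw : i = w
            · subst i; exact hx'w
            rw [hx'ne i hiu hiw]
            rcases (hmemR' i).mp hiR' with h | h | h | h
            · exact absurd h hiu
            · exact absurd h hiw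
            · exact (hx i).2.1 h
            · exact hzero_nb i h hiu
          · intro hiR'
            have hiu : i ≠ u := fun h => hiR' ((hmemR' i).mpr (Or.inl h))
            have hiw : i ≠ w := fun h => hiR' ((hmemR' i).mpr (Or.inr (Or.inl h)))
            have hiRold : i ∉ R := fun h => hiR' ((hmemR' i).mpr (Or.inr (Or.inr (Or.inl h))))
            have hinb : i ∉ G.neighborFinset w := fun h =>
              hiR' ((hmemR' i).mpr (Or.inr (Or.inr (Or.inr h))))
            have hiS : i ∉ S := by
              rw [hSdef, Finset.mem_insert, Finset.mem_singleton]
              push_neg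
              exact ⟨hiu, hiw⟩
            have heq : cnSum (cutG G S) x' i = cnSum G x i := by
              apply cnSum_cut G S x x' i hiS
              · intro j hj
                rw [hSdef, Finset.mem_insert, Finset.mem_singleton] at hj
                push_neg at hj
                exact hx'ne j hj.1 hj.2
              · intro j hj hadj
                rw [hSdef, Finset.mem_insert, Finset.mem_singleton] at hj
                rcases hj with hj | hj
                · subst j; exact absurd hadj (hnotadj_u i hiw)
                · subst j; exact absurd hadj (hnotadj_w i hinb)
            rw [heq, hx'ne i hiu hiw]
            exact (hx i).2.2 hiRold
        obtain ⟨y', hy', hspec', hsupp', hsum'⟩ :=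
          ih (cutG G S) hcard' hac' R' x' hgen'
        have hy'u : y' u = 0 := (hy' u).2.1 ((hmemR' u).mpr (Or.inl rfl))
        have hy'w : y' w = 0 := (hy' w).2.1 ((hmemR' w).mpr (Or.inr (Or.inl rfl)))
        have hy'nb : ∀ j ∈ G.neighborFinset w, y' j = 0 := fun j hj =>
          (hy' j).2.1 ((hmemR' j).mpr (Or.inr (Or.inr (Or.inr hj))))
        set y : Fin n → ℝ := Function.update y' w estar with hydef
        have hyw : y w = estar := Function.update_self w estar y'
        have hyne : ∀ j, j ≠ w → y j = y' j := fun j hj => Function.update_of_ne hj estar y'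
        have hynn : ∀ j, 0 ≤ y j := by
          intro j
          by_cases hj : j = w
          · subst j; rw [hyw]; linarith
          · rw [hyne j hj]; exact (hy' j).1
        refine ⟨y, ?_, ?_, ?_, ?_⟩
        · intro i
          refine ⟨hynn i, ?_, ?_⟩
          · intro hiR
            have hiw : i ≠ w := fun h => hwR (h ▸ hiR)
            rw [hyne i hiw]
            exact (hy' i).2.1 ((hmemR' i).mpr (Or.inr (Or.inr (Or.inl hiR))))
          · intro hiR
            by_cases hiw : i = w
            · subst i
              have hcny : cnSum G y w = estar := by
                unfold cnSum
                rw [hyw]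
                have hzsum : ∑ j ∈ G.neighborFinset w, y j = 0 := by
                  apply Finset.sum_eq_zero
                  intro j hj
                  have hjw : j ≠ w := by
                    intro hjweq
                    subst j
                    exact G.loopless.irrefl w ((SimpleGraph.mem_neighborFinset G w w).mp hj)
                  rw [hyne j hjw]
                  exact hy'nb j hj
                rw [hzsum]
                ring
              exact ⟨le_of_eq hcny.symm, by rw [hcny]; ring⟩
            by_cases hiu : i = u
            · subst i
              have hyu0 : y u = 0 := by rw [hyne u huw', hy'u]
              have hcny : cnSum G y u = estar := by
                unfold cnSum
                rw [hnbu, Finset.sum_singleton, hyu0, hyw]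
                ring
              exact ⟨le_of_eq hcny.symm, by rw [hcny]; ring⟩
            by_cases hinb : i ∈ G.neighborFinset w
            · have hyi0 : y i = 0 := by
                rw [hyne i hiw]
                exact (hy' i).2.1 ((hmemR' i).mpr (Or.inr (Or.inr (Or.inr hinb))))
              have hwnb : w ∈ G.neighborFinset i := by
                rw [SimpleGraph.mem_neighborFinset]
                exact ((SimpleGraph.mem_neighborFinset G w i).mp hinb).symm
              have hge : estar ≤ cnSum G y i := by
                unfold cnSum
                have h1 := Finset.single_le_sum (f := y) (fun j _ => hynn j) hwnb
                rw [hyw] at h1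
                linarith [hynn i]
              exact ⟨hge, by rw [hyi0]; ring⟩
            · have hiS : i ∉ S := by
                rw [hSdef, Finset.mem_insert, Finset.mem_singleton]
                push_neg
                exact ⟨hiu, hiw⟩
              have heq : cnSum (cutG G S) y' i = cnSum G y i := by
                apply cnSum_cut G S y y' i hiS
                · intro j hj
                  rw [hSdef, Finset.mem_insert, Finset.mem_singleton] at hj
                  push_neg at hj
                  exact (hyne j hj.2).symm
                · intro j hj hadj
                  rw [hSdef, Finset.mem_insert, Finset.mem_singleton] at hj
                  rcases hj with hj | hj
                  · subst j; exact absurd hadj (hnotadj_u i hiw)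
                  · subst j; exact absurd hadj (hnotadj_w i hinb)
              have hiR' : i ∉ R' := by
                intro h
                rcases (hmemR' i).mp h with h | h | h | h
                · exact hiu h
                · exact hiw h
                · exact hiR h
                · exact hinb h
              rw [← heq, hyne i hiw]
              exact (hy' i).2.2 hiR'
        · intro i
          by_cases hiw : i = w
          · subst i; right; exact hyw
          · rw [hyne i hiw]; exact hspec' i
        · intro i hyne0
          by_cases hiw : i = w
          · subst i; exact hxw
          · rw [hyne i hiw] at hyne0
            have h1 := hsupp' i hyne0
            by_cases hiu : i = u
            · subst i; rw [hx'u] at h1; exact absurd rfl h1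
            · rw [hx'ne i hiu hiw] at h1
              exact h1
        · have hsx' : ∑ i, x' i = ∑ i, x i - estar := by
            rw [hx'def, sum_update, sum_update,
              Function.update_of_ne (Ne.symm huw') 0 x]
            linarith
          rw [hydef, sum_update, hsum', hsx', hy'w]
          ring

end Aux

/-- In a forest, a non-specialized equilibrium `x` admits a specialized
equilibrium `y` supported inside the support of `x` with the same total
effort. -/
theorem stmt_15 {n : ℕ} (G : SimpleGraph (Fin n)) [DecidableRel G.Adj]
    (hG : G.IsAcyclic) (estar : ℝ) (he : 0 < estar)
    (x : Fin n → ℝ) (hx : IsNE G estar x)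
    (hns : ∃ i, x i ≠ 0 ∧ x i ≠ estar) :
    ∃ y : Fin n → ℝ, IsNE G estar y ∧ (∀ i, y i = 0 ∨ y i = estar) ∧
      (∀ i, y i ≠ 0 → x i ≠ 0) ∧ (∑ i, y i) = ∑ i, x i := by
  obtain ⟨y, hy, hspec, hsupp, hsum⟩ :=
    key estar he G.edgeSet.ncard G le_rfl hG ∅ x
      (fun i => ⟨(hx i).1, fun h => absurd h (Finset.notMem_empty i),
        fun _ => ⟨(hx i).2.1, (hx i).2.2⟩⟩)
  exact ⟨y, fun i => ⟨(hy i).1, ((hy i).2.2 (Finset.notMem_empty i)).1,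
    ((hy i).2.2 (Finset.notMem_empty i)).2⟩, hspec, hsupp, hsum⟩
end

section
/- Let x be a Nash equilibrium of the public goods game on a graph G and let S ⊆ supp(x) be a maximal independent set of G. Then e*·|S| ≥ ∑_i x_i, i.e., the specialized equilibrium supported on S requires at least as much total effort as x. -/
/-- If `S` is a maximal independent set contained in the support of an
equilibrium `x`, then the specialized equilibrium on `S` requires at least
as much total effort: `e*·|S| ≥ ∑ᵢ xᵢ`. -/
theorem stmt_16 {n : ℕ} (G : SimpleGraph (Fin n)) [DecidableRel G.Adj]
    (estar : ℝ) (he : 0 < estar) (x : Fin n → ℝ) (hx : IsNE G estar x)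
    (S : Finset (Fin n)) (hS : IsMaxIndep G S) (hsupp : ∀ i ∈ S, 0 < x i) :
    (∑ i, x i) ≤ estar * S.card := by
  classical
  have hcover : ∀ j : Fin n, ∃ i ∈ S, j = i ∨ G.Adj i j := by
    intro j
    by_contra h
    push_neg at h
    have hjS : j ∉ S := fun hj => (h j hj).1 rfl
    have hT : IsIndep G (insert j S) := by
      intro a ha b hb
      simp only [Finset.mem_insert] at ha hb
      rcases ha with rfl | ha <;> rcases hb with rfl | hb
      · exact G.loopless.irrefl _
      · intro hadj; exact (h b hb).2 hadj.symm
      · intro hadj; exact (h a ha).2 hadj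
      · exact hS.1 a ha b hb
    have heq := hS.2 _ hT (Finset.subset_insert _ _)
    exact hjS (heq ▸ Finset.mem_insert_self j S)
  have heq : ∀ i ∈ S, cnSum G x i = estar := by
    intro i hi
    rcases mul_eq_zero.mp (hx i).2.2 with h | h
    · exact absurd h (ne_of_gt (hsupp i hi))
    · linarith
  have hcn : ∀ i : Fin n, cnSum G x i = ∑ j, (if j = i ∨ G.Adj i j then x j else 0) := by
    intro i
    rw [Finset.sum_ite, Finset.sum_const_zero, add_zero]
    have hset : Finset.univ.filter (fun j => j = i ∨ G.Adj i j)
        = insert i (G.neighborFinset i) := by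
      ext j
      simp [Finset.mem_insert, eq_comm, SimpleGraph.adj_comm]
    rw [hset, Finset.sum_insert (by simp), cnSum]
  have key : (∑ i, x i) ≤ ∑ i ∈ S, cnSum G x i := by
    calc (∑ i, x i) ≤ ∑ j, ∑ i ∈ S, (if j = i ∨ G.Adj i j then x j else 0) := by
          apply Finset.sum_le_sum
          intro j _
          obtain ⟨i₀, hi₀, hc⟩ := hcover j
          have h0 : ∀ i ∈ S, 0 ≤ (if j = i ∨ G.Adj i j then x j else 0) :=
            fun i _ => by split_ifs; exacts [(hx j).1, le_refl 0]
          have hle := Finset.single_le_sum (f := fun i => if j = i ∨ G.Adj i j then x j else 0) h0 hi₀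
          simpa [hc] using hle
      _ = ∑ i ∈ S, cnSum G x i := by
          rw [Finset.sum_comm]
          exact Finset.sum_congr rfl fun i _ => (hcn i).symm
  calc (∑ i, x i) ≤ ∑ i ∈ S, cnSum G x i := key
    _ = ∑ i ∈ S, estar := Finset.sum_congr rfl heq
    _ = estar * S.card := by rw [Finset.sum_const, nsmul_eq_mul, mul_comm]
end

section
/- Consequence for distributed equilibria: if x is a distributed Nash equilibrium (x_i > 0 for all i) of the public goods game on G, and S is any maximal independent set of G, then the total cost of x is at most that of the specialized equilibrium on S: c·∑_i x_i ≤ c·e*·|S|. -/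
/-- The cost of a distributed equilibrium is at most the cost of any
specialized equilibrium: `c ∑ᵢ xᵢ ≤ c e* |S|` for any maximal independent
set `S`. -/
theorem stmt_17 {n : ℕ} (G : SimpleGraph (Fin n)) [DecidableRel G.Adj]
    (estar c : ℝ) (he : 0 < estar) (hc : 0 < c)
    (x : Fin n → ℝ) (hx : IsNE G estar x) (hdist : ∀ i, 0 < x i)
    (S : Finset (Fin n)) (hS : IsMaxIndep G S) :
    c * ∑ i, x i ≤ c * (estar * S.card) := by
  classical
  -- every cnSum equals estar
  have hcn : ∀ i, cnSum G x i = estar := by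
    intro i
    have h3 := (hx i).2.2
    have hne : x i ≠ 0 := (hdist i).ne'
    have := (mul_eq_zero.mp h3).resolve_left hne
    linarith
  -- domination
  have hdom : ∀ j, ∃ i, i ∈ S ∧ j ∈ insert i (G.neighborFinset i) := by
    intro j
    by_cases hj : j ∈ S
    · exact ⟨j, hj, Finset.mem_insert_self _ _⟩
    · have hni : ¬ IsIndep G (insert j S) := by
        intro h
        have heq := hS.2 _ h (Finset.subset_insert _ _)
        have : j ∈ S := heq ▸ Finset.mem_insert_self j S
        exact hj this
      simp only [IsIndep, not_forall, not_not] at hni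
      obtain ⟨a, ha, b, hb, hab⟩ := hni
      rcases Finset.mem_insert.mp ha with rfl | haS
      · rcases Finset.mem_insert.mp hb with rfl | hbS
        · exact absurd hab (G.loopless.irrefl _)
        · exact ⟨b, hbS, Finset.mem_insert_of_mem
            ((SimpleGraph.mem_neighborFinset _ _ _).mpr hab.symm)⟩
      · rcases Finset.mem_insert.mp hb with rfl | hbS
        · exact ⟨a, haS, Finset.mem_insert_of_mem
            ((SimpleGraph.mem_neighborFinset _ _ _).mpr hab)⟩
        · exact absurd hab (hS.1 a haS b hbS)
  choose dom hdomS hdomN using hdom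
  -- cnSum as sum over closed neighborhood
  have hcn' : ∀ i, cnSum G x i = ∑ j ∈ insert i (G.neighborFinset i), x j := by
    intro i
    rw [Finset.sum_insert (SimpleGraph.notMem_neighborFinset_self G i)]
    rfl
  have key : (∑ i, x i) ≤ ∑ i ∈ S, cnSum G x i := by
    rw [← Finset.sum_fiberwise_of_maps_to (g := dom)
      (fun j _ => hdomS j) (f := x)]
    apply Finset.sum_le_sum
    intro i _
    rw [hcn' i]
    apply Finset.sum_le_sum_of_subset_of_nonneg
    · intro j hj
      simp only [Finset.mem_filter] at hj
      have := hdomN j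
      rwa [hj.2] at this
    · intro j _ _
      exact (hdist j).le
  have : (∑ i, x i) ≤ estar * S.card := by
    calc (∑ i, x i) ≤ ∑ i ∈ S, cnSum G x i := key
    _ = ∑ _i ∈ S, estar := Finset.sum_congr rfl (fun i _ => hcn i)
    _ = estar * S.card := by rw [Finset.sum_const, nsmul_eq_mul, mul_comm]
  exact mul_le_mul_of_nonneg_left this hc.le
end

section
/- If G is a well-covered forest on n vertices with no isolated vertices, then every Nash equilibrium x of the public goods game on G has the same total effort, namely ∑_i x_i = (1/2)·e*·n; equivalently every equilibrium incurs total cost (1/2)·c·e*·n. -/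
set_option linter.unusedSectionVars false
set_option maxHeartbeats 1000000

namespace Stmt18
variable {n : ℕ} (G : SimpleGraph (Fin n)) [DecidableRel G.Adj]

def nbr (V : Finset (Fin n)) (i : Fin n) : Finset (Fin n) := V.filter (fun j => G.Adj i j)

lemma mem_nbr {V : Finset (Fin n)} {i j : Fin n} : j ∈ nbr G V i ↔ j ∈ V ∧ G.Adj i j := by
  simp [nbr]

def IndepV (V S : Finset (Fin n)) : Prop := S ⊆ V ∧ ∀ i ∈ S, ∀ j ∈ S, ¬ G.Adj i j

def MaxV (V S : Finset (Fin n)) : Prop :=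
  IndepV G V S ∧ ∀ t ∈ V, t ∉ S → ∃ s ∈ S, G.Adj s t

def WcV (V : Finset (Fin n)) : Prop :=
  ∀ S T, MaxV G V S → MaxV G V T → S.card = T.card

lemma extend_aux : ∀ (k : ℕ) (V S : Finset (Fin n)), V.card ≤ S.card + k →
    IndepV G V S → ∃ T, MaxV G V T ∧ S ⊆ T := by
  intro k
  induction k with
  | zero =>
    intro V S hcard hS
    have hSV : S = V := Finset.eq_of_subset_of_card_le hS.1 (by omega)
    exact ⟨S, ⟨hS, fun t ht hts => absurd (hSV ▸ ht) hts⟩, Finset.Subset.refl _⟩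
  | succ k ih =>
    intro V S hcard hS
    by_cases h : ∀ t ∈ V, t ∉ S → ∃ s ∈ S, G.Adj s t
    · exact ⟨S, ⟨hS, h⟩, Finset.Subset.refl _⟩
    · push_neg at h
      obtain ⟨t, htV, htS, ht⟩ := h
      have hS' : IndepV G V (insert t S) := by
        refine ⟨Finset.insert_subset htV hS.1, ?_⟩
        intro i hi j hj hadj
        rcases Finset.mem_insert.1 hi with hi' | hi' <;>
          rcases Finset.mem_insert.1 hj with hj' | hj'
        · exact G.irrefl (by rw [hi', hj'] at hadj; exact hadj)
        · exact ht j hj' (SimpleGraph.Adj.symm (by rw [hi'] at hadj; exact hadj))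
        · exact ht i hi' (by rw [hj'] at hadj; exact hadj)
        · exact hS.2 i hi' j hj' hadj
      have hcard' : V.card ≤ (insert t S).card + k := by
        rw [Finset.card_insert_of_notMem htS]; omega
      obtain ⟨T, hT, hsub⟩ := ih V (insert t S) hcard' hS'
      exact ⟨T, hT, (Finset.subset_insert t S).trans hsub⟩

lemma extendMax {V S : Finset (Fin n)} (h : IndepV G V S) :
    ∃ T, MaxV G V T ∧ S ⊆ T :=
  extend_aux G V.card V S (by omega) h

lemma no_triangle (hG : G.IsAcyclic) {a b c : Fin n} (h1 : G.Adj a b) (h2 : G.Adj b c)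
    (h3 : G.Adj c a) : False := by
  refine hG (SimpleGraph.Walk.cons h1 (SimpleGraph.Walk.cons h2
    (SimpleGraph.Walk.cons h3 SimpleGraph.Walk.nil))) ?_
  rw [SimpleGraph.Walk.cons_isCycle_iff]
  have hab := h1.ne
  have hbc := h2.ne
  have hca := h3.ne
  constructor
  · simp [SimpleGraph.Walk.isPath_def]
    aesop
  · simp [Sym2.eq_iff]
    aesop

lemma no_square (hG : G.IsAcyclic) {a b c d : Fin n} (h1 : G.Adj a b) (h2 : G.Adj b c)
    (h3 : G.Adj c d) (h4 : G.Adj d a) (hac : a ≠ c) (hbd : b ≠ d) : False := by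
  refine hG (SimpleGraph.Walk.cons h1 (SimpleGraph.Walk.cons h2
    (SimpleGraph.Walk.cons h3 (SimpleGraph.Walk.cons h4 SimpleGraph.Walk.nil)))) ?_
  rw [SimpleGraph.Walk.cons_isCycle_iff]
  have hab := h1.ne
  have hbc := h2.ne
  have hcd := h3.ne
  have hda := h4.ne
  constructor
  · simp [SimpleGraph.Walk.isPath_def]
    aesop
  · simp [Sym2.eq_iff]
    aesop


lemma exists_leaf (hG : G.IsAcyclic) (V : Finset (Fin n)) (hne : V.Nonempty)
    (hdeg : ∀ i ∈ V, (nbr G V i).Nonempty) : ∃ v ∈ V, ∃ u, nbr G V v = {u} := by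
  classical
  set P : ℕ → Prop := fun k => ∃ (a b : Fin n) (p : G.Walk a b), p.IsPath ∧
    (∀ y ∈ p.support, y ∈ V) ∧ p.length = k with hP
  have hbdd : ∀ k, P k → k ≤ n := by
    rintro k ⟨a, b, p, hp, -, hlen⟩
    have := hp.length_lt
    simp only [Fintype.card_fin] at this
    omega
  have hP1 : P 1 := by
    obtain ⟨v0, hv0⟩ := hne
    obtain ⟨u0, hu0⟩ := hdeg v0 hv0
    rw [mem_nbr] at hu0
    refine ⟨v0, u0, SimpleGraph.Walk.cons hu0.2 SimpleGraph.Walk.nil, ?_, ?_, rfl⟩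
    · simp [SimpleGraph.Walk.isPath_def, hu0.2.ne]
    · intro y hy
      simp only [SimpleGraph.Walk.support_cons, SimpleGraph.Walk.support_nil,
        List.mem_cons, List.mem_singleton] at hy
      rcases hy with rfl | hy
      · exact hv0
      · simp at hy; rcases hy with rfl; exact hu0.1
  set k := Nat.findGreatest P (n + 1) with hk
  have hk1 : 1 ≤ k := Nat.le_findGreatest (by omega) hP1
  have hPk : P k := Nat.findGreatest_spec (m := 1) (by omega) hP1
  have hmax : ¬ P (k + 1) := by
    intro h
    have hle := hbdd _ h
    exact Nat.findGreatest_is_greatest (lt_add_one k) (by omega) h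
  obtain ⟨a, b, p, hp, hsup, hlen⟩ := hPk
  -- work with the reverse walk from b
  refine ⟨b, hsup b p.end_mem_support, ?_⟩
  have hq : p.reverse.IsPath := hp.reverse
  have hqsup : ∀ y ∈ p.reverse.support, y ∈ V := by
    intro y hy; exact hsup y (by rwa [SimpleGraph.Walk.support_reverse, List.mem_reverse] at hy)
  have hqlen : p.reverse.length = k := by rw [SimpleGraph.Walk.length_reverse]; exact hlen
  revert hq hqsup hqlen
  generalize p.reverse = q
  intro hq hqsup hqlen
  cases q with
  | nil => simp at hqlen; omega
  | @cons _ c _ hbc q' =>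
    refine ⟨c, ?_⟩
    have hq'path : q'.IsPath ∧ b ∉ q'.support := by
      rw [SimpleGraph.Walk.cons_isPath_iff] at hq; exact hq
    ext t
    simp only [Finset.mem_singleton, mem_nbr]
    constructor
    · rintro ⟨hyV, hby⟩
      by_contra hyc
      by_cases hys : t ∈ q'.support
      · -- cycle
        have hr := hq'path.1.takeUntil hys
        have hrsub := q'.support_takeUntil_subset hys
        have hinner : (SimpleGraph.Walk.cons hbc (q'.takeUntil t hys)).IsPath := by
          rw [SimpleGraph.Walk.cons_isPath_iff]
          exact ⟨hr, fun hb => hq'path.2 (hrsub hb)⟩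
        have hcyc : (SimpleGraph.Walk.cons hby.symm
            (SimpleGraph.Walk.cons hbc (q'.takeUntil t hys))).IsCycle := by
          rw [SimpleGraph.Walk.cons_isCycle_iff]
          refine ⟨hinner, ?_⟩
          intro hmem
          rw [SimpleGraph.Walk.edges_cons, List.mem_cons] at hmem
          rcases hmem with hmem | hmem
          · rw [Sym2.eq_iff] at hmem
            rcases hmem with ⟨h1, h2⟩ | ⟨h1, h2⟩
            · exact hby.ne' h1
            · exact hyc h1
          · exact hq'path.2 (hrsub
              (SimpleGraph.Walk.snd_mem_support_of_mem_edges _ hmem))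
        exact hG _ hcyc
      · -- extend the path
        have hyb : t ∉ (SimpleGraph.Walk.cons hbc q').support := by
          rw [SimpleGraph.Walk.support_cons]
          intro h
          rcases List.mem_cons.1 h with rfl | h
          · exact hby.ne rfl
          · exact hys h
        have : P (k + 1) := by
          refine ⟨t, a, SimpleGraph.Walk.cons hby.symm (SimpleGraph.Walk.cons hbc q'), ?_, ?_, ?_⟩
          · rw [SimpleGraph.Walk.cons_isPath_iff]; exact ⟨hq, hyb⟩
          · intro z hz
            rw [SimpleGraph.Walk.support_cons] at hz
            rcases List.mem_cons.1 hz with rfl | hz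
            · exact hyV
            · exact hqsup z hz
          · simp only [SimpleGraph.Walk.length_cons] at hqlen ⊢; omega
        exact hmax this
    · rintro rfl
      exact ⟨hqsup t (by simp [SimpleGraph.Walk.support_cons, q'.start_mem_support]), hbc⟩


lemma leafy {V : Finset (Fin n)} {a u : Fin n} (ha : nbr G V a = {u}) :
    ∀ b ∈ V, G.Adj a b → b = u := by
  intro b hb hab
  have : b ∈ nbr G V a := (mem_nbr G).2 ⟨hb, hab⟩
  rw [ha, Finset.mem_singleton] at this
  exact this

lemma no_two_leaves {V : Finset (Fin n)} (hwc : WcV G V) {v w u : Fin n}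
    (hvV : v ∈ V) (hwV : w ∈ V) (hv : nbr G V v = {u}) (hw : nbr G V w = {u})
    (hvw : v ≠ w) : False := by
  have huv : u ∈ V ∧ G.Adj v u := (mem_nbr G).1 (hv ▸ Finset.mem_singleton_self u)
  have huw : u ∈ V ∧ G.Adj w u := (mem_nbr G).1 (hw ▸ Finset.mem_singleton_self u)
  obtain ⟨S, hS, hsubS⟩ := extendMax G (S := {u}) (V := V)
    ⟨Finset.singleton_subset_iff.2 huv.1, by
      intro i hi j hj hadj
      rw [Finset.mem_singleton] at hi hj
      subst hi; subst hj; exact G.irrefl hadj⟩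
  have huS : u ∈ S := hsubS (Finset.mem_singleton_self u)
  have hvS : v ∉ S := fun h => hS.1.2 v h u huS huv.2
  have hwS : w ∉ S := fun h => hS.1.2 w h u huS huw.2
  have hSsub : S.erase u ⊆ V := fun x hx => hS.1.1 (Finset.mem_of_mem_erase hx)
  have hlv := leafy G hv
  have hlw := leafy G hw
  have hSindep : IndepV G V (insert v (insert w (S.erase u))) := by
    constructor
    · intro i hi
      rw [Finset.mem_insert, Finset.mem_insert] at hi
      rcases hi with rfl | rfl | hi
      · exact hvV
      · exact hwV
      · exact hSsub hi
    · intro i hi j hj hadj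
      rw [Finset.mem_insert, Finset.mem_insert] at hi hj
      rcases hi with rfl | rfl | hi <;> rcases hj with rfl | rfl | hj
      · exact G.irrefl hadj
      · exact huw.2.ne (hlv _ hwV hadj)
      · exact (Finset.ne_of_mem_erase hj) (hlv _ (hSsub hj) hadj)
      · exact huv.2.ne (hlw _ hvV hadj)
      · exact G.irrefl hadj
      · exact (Finset.ne_of_mem_erase hj) (hlw _ (hSsub hj) hadj)
      · exact (Finset.ne_of_mem_erase hi) (hlv _ (hSsub hi) hadj.symm)
      · exact (Finset.ne_of_mem_erase hi) (hlw _ (hSsub hi) hadj.symm)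
      · exact hS.1.2 i (Finset.mem_of_mem_erase hi) j (Finset.mem_of_mem_erase hj) hadj
  obtain ⟨T, hT, hsubT⟩ := extendMax G hSindep
  have hcardeq := hwc S T hS hT
  have hle := Finset.card_le_card hsubT
  have h1 : w ∉ S.erase u := fun h => hwS (Finset.mem_of_mem_erase h)
  have h2 : v ∉ insert w (S.erase u) := by
    rw [Finset.mem_insert]
    rintro (rfl | h)
    · exact hvw rfl
    · exact hvS (Finset.mem_of_mem_erase h)
  rw [Finset.card_insert_of_notMem h2, Finset.card_insert_of_notMem h1,
    Finset.card_erase_of_mem huS] at hle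
  have hS1 : 1 ≤ S.card := Finset.card_pos.2 ⟨u, huS⟩
  omega

lemma leaf_partner (hG : G.IsAcyclic) {V : Finset (Fin n)} (hwc : WcV G V)
    {v u w z : Fin n} (hvV : v ∈ V) (hv : nbr G V v = {u}) (hwV : w ∈ V)
    (hnw : nbr G V w = insert u {z}) (huz : u ≠ z) (hwv : w ≠ v)
    {y : Fin n} (hy : y ∈ nbr G V z) (hyw : y ≠ w) : False := by
  have huv : u ∈ V ∧ G.Adj v u := (mem_nbr G).1 (hv ▸ Finset.mem_singleton_self u)
  have hwu : u ∈ V ∧ G.Adj w u := by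
    have : u ∈ nbr G V w := by rw [hnw]; exact Finset.mem_insert_self u _
    exact (mem_nbr G).1 this
  have hwz : z ∈ V ∧ G.Adj w z := by
    have : z ∈ nbr G V w := by rw [hnw]; exact Finset.mem_insert_of_mem (Finset.mem_singleton_self z)
    exact (mem_nbr G).1 this
  have hzy : y ∈ V ∧ G.Adj z y := (mem_nbr G).1 hy
  have hlv := leafy G hv
  have hyu : y ≠ u := by
    rintro rfl
    exact no_triangle G hG hwu.2.symm hwz.2 hzy.2
  have hyv : y ≠ v := by
    rintro rfl
    exact huz (hlv z hwz.1 hzy.2.symm).symm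
  have hvu : v ≠ u := huv.2.ne
  have hnadjuy : ¬ G.Adj u y := by
    intro h
    exact no_square G hG hwu.2.symm hwz.2 hzy.2 h.symm huz hyw.symm
  obtain ⟨S, hS, hsubS⟩ := extendMax G (S := {u, y}) (V := V)
    ⟨by
      intro i hi
      rw [Finset.mem_insert, Finset.mem_singleton] at hi
      rcases hi with rfl | rfl
      · exact huv.1
      · exact hzy.1, by
      intro i hi j hj hadj
      rw [Finset.mem_insert, Finset.mem_singleton] at hi hj
      rcases hi with rfl | rfl <;> rcases hj with rfl | rfl
      · exact G.irrefl hadj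
      · exact hnadjuy hadj
      · exact hnadjuy hadj.symm
      · exact G.irrefl hadj⟩
  have huS : u ∈ S := hsubS (Finset.mem_insert_self u _)
  have hyS : y ∈ S := hsubS (Finset.mem_insert_of_mem (Finset.mem_singleton_self y))
  have hvS : v ∉ S := fun h => hS.1.2 v h u huS huv.2
  have hwS : w ∉ S := fun h => hS.1.2 w h u huS hwu.2
  have hzS : z ∉ S := fun h => hS.1.2 z h y hyS hzy.2
  have hSsub : S.erase u ⊆ V := fun x hx => hS.1.1 (Finset.mem_of_mem_erase hx)
  have hlw : ∀ b ∈ V, G.Adj w b → b = u ∨ b = z := by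
    intro b hb hab
    have : b ∈ nbr G V w := (mem_nbr G).2 ⟨hb, hab⟩
    rw [hnw, Finset.mem_insert, Finset.mem_singleton] at this
    exact this
  have hSindep : IndepV G V (insert v (insert w (S.erase u))) := by
    constructor
    · intro i hi
      rw [Finset.mem_insert, Finset.mem_insert] at hi
      rcases hi with rfl | rfl | hi
      · exact hvV
      · exact hwV
      · exact hSsub hi
    · intro i hi j hj hadj
      rw [Finset.mem_insert, Finset.mem_insert] at hi hj
      have hwkey : ∀ b, b ∈ S.erase u → ¬ G.Adj w b := by
        intro b hb hadj'
        rcases hlw b (hSsub hb) hadj' with rfl | rfl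
        · exact (Finset.ne_of_mem_erase hb) rfl
        · exact hzS (Finset.mem_of_mem_erase hb)
      have hvwne : ¬ G.Adj v w := by
        intro h
        exact hwu.2.ne (hlv w hwV h)
      rcases hi with rfl | rfl | hi <;> rcases hj with rfl | rfl | hj
      · exact G.irrefl hadj
      · exact hvwne hadj
      · exact (Finset.ne_of_mem_erase hj) (hlv _ (hSsub hj) hadj)
      · exact hvwne hadj.symm
      · exact G.irrefl hadj
      · exact hwkey j hj hadj
      · exact (Finset.ne_of_mem_erase hi) (hlv _ (hSsub hi) hadj.symm)
      · exact hwkey i hi hadj.symm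
      · exact hS.1.2 i (Finset.mem_of_mem_erase hi) j (Finset.mem_of_mem_erase hj) hadj
  obtain ⟨T, hT, hsubT⟩ := extendMax G hSindep
  have hcardeq := hwc S T hS hT
  have hle := Finset.card_le_card hsubT
  have h1 : w ∉ S.erase u := fun h => hwS (Finset.mem_of_mem_erase h)
  have h2 : v ∉ insert w (S.erase u) := by
    rw [Finset.mem_insert]
    rintro (rfl | h)
    · exact hwv rfl
    · exact hvS (Finset.mem_of_mem_erase h)
  rw [Finset.card_insert_of_notMem h2, Finset.card_insert_of_notMem h1,
    Finset.card_erase_of_mem huS] at hle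
  have hS1 : 1 ≤ S.card := Finset.card_pos.2 ⟨u, huS⟩
  omega

lemma matching_aux (hG : G.IsAcyclic) : ∀ (k : ℕ) (V : Finset (Fin n)), V.card ≤ k →
    (∀ i ∈ V, (nbr G V i).Nonempty) → WcV G V →
    ∃ M : Finset (Fin n × Fin n),
      (∀ p ∈ M, nbr G V p.1 = {p.2}) ∧
      (∀ p ∈ M, ∀ q ∈ M, p ≠ q → ({p.1, p.2} : Finset (Fin n)) ∩ {q.1, q.2} = ∅) ∧
      M.biUnion (fun p => ({p.1, p.2} : Finset (Fin n))) = V := by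
  intro k
  induction k with
  | zero =>
    intro V hcard _ _
    have hVe : V = ∅ := Finset.card_eq_zero.1 (by omega)
    exact ⟨∅, by simp, by simp, by simp [hVe]⟩
  | succ k ih =>
    intro V hcard hdeg hwc
    rcases V.eq_empty_or_nonempty with rfl | hne
    · exact ⟨∅, by simp, by simp, by simp⟩
    obtain ⟨v, hvV, u, hleaf⟩ := exists_leaf G hG V hne hdeg
    have huv : u ∈ V ∧ G.Adj v u := (mem_nbr G).1 (hleaf ▸ Finset.mem_singleton_self u)
    have hvu : v ≠ u := huv.2.ne
    set V' : Finset (Fin n) := (V.erase v).erase u with hV'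
    have hV'subV : V' ⊆ V := fun x hx => Finset.mem_of_mem_erase (Finset.mem_of_mem_erase hx)
    have hvV' : v ∉ V' := fun h => Finset.ne_of_mem_erase (Finset.mem_of_mem_erase h) rfl
    have huV' : u ∉ V' := fun h => Finset.ne_of_mem_erase h rfl
    have hmemV' : ∀ i, i ∈ V' ↔ i ∈ V ∧ i ≠ v ∧ i ≠ u := by
      intro i
      rw [hV', Finset.mem_erase, Finset.mem_erase]
      tauto
    have hVeq : V = insert v (insert u V') := by
      rw [hV', Finset.insert_erase (Finset.mem_erase.2 ⟨Ne.symm hvu, huv.1⟩),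
        Finset.insert_erase hvV]
    have hnbr : ∀ i, nbr G V' i = ((nbr G V i).erase v).erase u := by
      intro i
      ext j
      simp only [mem_nbr, Finset.mem_erase, hmemV']
      tauto
    -- min degree in V'
    have hdeg' : ∀ i ∈ V', (nbr G V' i).Nonempty := by
      intro i hiV'
      have hiV := hV'subV hiV'
      by_contra hemp
      rw [Finset.not_nonempty_iff_eq_empty] at hemp
      have hvu' : ∀ j ∈ nbr G V i, j = v ∨ j = u := by
        intro j hj
        by_contra hc
        push_neg at hc
        have : j ∈ ((nbr G V i).erase v).erase u :=
          Finset.mem_erase.2 ⟨hc.2, Finset.mem_erase.2 ⟨hc.1, hj⟩⟩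
        rw [← hnbr i, hemp] at this
        exact absurd this (Finset.notMem_empty j)
      have hnv : ∀ j ∈ nbr G V i, j = u := by
        intro j hj
        rcases hvu' j hj with rfl | rfl
        · have hadj := ((mem_nbr G).1 hj).2
          have : i = u := leafy G hleaf i hiV hadj.symm
          exact absurd hiV' (this ▸ huV')
        · rfl
      obtain ⟨j0, hj0⟩ := hdeg i hiV
      have hj0u := hnv j0 hj0
      subst hj0u
      have hileaf : nbr G V i = {j0} := by
        apply Finset.eq_singleton_iff_unique_mem.2 ⟨hj0, hnv⟩
      have hiv : v ≠ i := fun h => hvV' (h ▸ hiV')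
      exact no_two_leaves G hwc hvV hiV hleaf hileaf hiv
    -- well-covered in V'
    have hlift : ∀ S, MaxV G V' S → MaxV G V (insert v S) := by
      intro S hS
      constructor
      · constructor
        · intro i hi
          rcases Finset.mem_insert.1 hi with rfl | hi
          · exact hvV
          · exact hV'subV (hS.1.1 hi)
        · intro i hi j hj hadj
          rcases Finset.mem_insert.1 hi with hi' | hi' <;>
            rcases Finset.mem_insert.1 hj with hj' | hj'
          · exact G.irrefl (by rw [hi', hj'] at hadj; exact hadj)
          · have hadj' : G.Adj v j := by rw [hi'] at hadj; exact hadj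
            have := leafy G hleaf j (hV'subV (hS.1.1 hj')) hadj'
            exact huV' (this ▸ hS.1.1 hj')
          · have hadj' : G.Adj v i := by rw [hj'] at hadj; exact hadj.symm
            have := leafy G hleaf i (hV'subV (hS.1.1 hi')) hadj'
            exact huV' (this ▸ hS.1.1 hi')
          · exact hS.1.2 i hi' j hj' hadj
      · intro t htV htS
        have : t = v ∨ t = u ∨ t ∈ V' := by
          rw [hVeq] at htV
          rw [Finset.mem_insert, Finset.mem_insert] at htV
          exact htV
        rcases this with rfl | rfl | htV'
        · exact absurd (Finset.mem_insert_self t S) htS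
        · exact ⟨v, Finset.mem_insert_self v S, huv.2⟩
        · obtain ⟨s, hs, hadj⟩ := hS.2 t htV' (fun h => htS (Finset.mem_insert_of_mem h))
          exact ⟨s, Finset.mem_insert_of_mem hs, hadj⟩
    have hwc' : WcV G V' := by
      intro S T hS hT
      have heq := hwc _ _ (hlift S hS) (hlift T hT)
      have hvS : v ∉ S := fun h => hvV' (hS.1.1 h)
      have hvT : v ∉ T := fun h => hvV' (hT.1.1 h)
      rw [Finset.card_insert_of_notMem hvS, Finset.card_insert_of_notMem hvT] at heq
      omega
    -- induction hypothesis
    have hcard' : V'.card ≤ k := by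
      have h1 : (V.erase v).card = V.card - 1 := Finset.card_erase_of_mem hvV
      have h2 : V'.card ≤ (V.erase v).card := by rw [hV']; exact Finset.card_erase_le
      have h3 : 1 ≤ V.card := Finset.card_pos.2 hne
      omega
    obtain ⟨M', hM'leaf, hM'disj, hM'union⟩ := ih V' hcard' hdeg' hwc'
    have hpairV' : ∀ p ∈ M', p.1 ∈ V' ∧ p.2 ∈ V' := by
      intro p hp
      constructor
      · rw [← hM'union]
        exact Finset.mem_biUnion.2 ⟨p, hp, by simp⟩
      · rw [← hM'union]
        exact Finset.mem_biUnion.2 ⟨p, hp, by simp⟩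
    have hadj12 : ∀ p ∈ M', G.Adj p.1 p.2 := by
      intro p hp
      have : p.2 ∈ nbr G V' p.1 := by
        rw [hM'leaf p hp]; exact Finset.mem_singleton_self _
      exact ((mem_nbr G).1 this).2
    have hdich : ∀ p ∈ M', (¬ G.Adj p.1 u ∧ nbr G V p.1 = {p.2}) ∨
        (G.Adj p.1 u ∧ nbr G V p.2 = {p.1}) := by
      intro p hp
      have hp1V' := (hpairV' p hp).1
      have hp2V' := (hpairV' p hp).2
      have hleafp := hM'leaf p hp
      have hadjp := hadj12 p hp
      have hnotv : ¬ G.Adj p.1 v := by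
        intro h
        have := leafy G hleaf p.1 (hV'subV hp1V') h.symm
        exact huV' (this ▸ hp1V')
      by_cases hadju : G.Adj p.1 u
      · right
        refine ⟨hadju, ?_⟩
        have hset : nbr G V p.1 = insert u {p.2} := by
          ext j
          rw [mem_nbr]
          constructor
          · rintro ⟨hjV, hadj⟩
            by_cases hju : j = u
            · simp [hju]
            have hjv : j ≠ v := fun h => hnotv (h ▸ hadj)
            have hjV' : j ∈ V' := (hmemV' j).2 ⟨hjV, hjv, hju⟩
            have : j ∈ nbr G V' p.1 := (mem_nbr G).2 ⟨hjV', hadj⟩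
            rw [hleafp, Finset.mem_singleton] at this
            simp [this]
          · intro hj
            rcases Finset.mem_insert.1 hj with rfl | hj
            · exact ⟨huv.1, hadju⟩
            · rw [Finset.mem_singleton] at hj
              subst hj
              exact ⟨hV'subV hp2V', hadjp⟩
        have hup2 : u ≠ p.2 := fun h => huV' (h ▸ hp2V')
        ext j
        rw [mem_nbr, Finset.mem_singleton]
        constructor
        · rintro ⟨hjV, hadj⟩
          by_contra hjp1
          exact leaf_partner G hG hwc hvV hleaf (hV'subV hp1V') hset hup2
            (fun h => hvV' (h ▸ hp1V')) ((mem_nbr G).2 ⟨hjV, hadj⟩) hjp1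
        · rintro rfl
          exact ⟨hV'subV hp1V', hadjp.symm⟩
      · left
        refine ⟨hadju, ?_⟩
        ext j
        rw [mem_nbr, Finset.mem_singleton]
        constructor
        · rintro ⟨hjV, hadj⟩
          have hjv : j ≠ v := fun h => hnotv (h ▸ hadj)
          have hju : j ≠ u := fun h => hadju (h ▸ hadj)
          have hjV' : j ∈ V' := (hmemV' j).2 ⟨hjV, hjv, hju⟩
          have : j ∈ nbr G V' p.1 := (mem_nbr G).2 ⟨hjV', hadj⟩
          rw [hleafp, Finset.mem_singleton] at this
          exact this
        · rintro rfl
          exact ⟨hV'subV hp2V', hadjp⟩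
    -- build the new matching
    set f : Fin n × Fin n → Fin n × Fin n :=
      fun p => if G.Adj p.1 u then (p.2, p.1) else p with hf
    have hfpair : ∀ p, ({(f p).1, (f p).2} : Finset (Fin n)) = {p.1, p.2} := by
      intro p
      by_cases h : G.Adj p.1 u <;> simp [hf, h, Finset.pair_comm]
    have hfleaf : ∀ p ∈ M', nbr G V (f p).1 = {(f p).2} := by
      intro p hp
      rcases hdich p hp with ⟨h1, h2⟩ | ⟨h1, h2⟩ <;> simp [hf, h1, h2]
    refine ⟨insert (v, u) (M'.image f), ?_, ?_, ?_⟩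
    · intro p hp
      rcases Finset.mem_insert.1 hp with rfl | hp
      · exact hleaf
      · obtain ⟨q, hq, rfl⟩ := Finset.mem_image.1 hp
        exact hfleaf q hq
    · have hdisjvu : ∀ q ∈ M', ({v, u} : Finset (Fin n)) ∩ {q.1, q.2} = ∅ := by
        intro q hq
        rw [Finset.eq_empty_iff_forall_notMem]
        intro j hj
        rw [Finset.mem_inter, Finset.mem_insert, Finset.mem_singleton,
          Finset.mem_insert, Finset.mem_singleton] at hj
        obtain ⟨hj1, hj2⟩ := hj
        have hjV' : j ∈ V' := by
          rcases hj2 with rfl | rfl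
          · exact (hpairV' q hq).1
          · exact (hpairV' q hq).2
        rcases hj1 with rfl | rfl
        · exact hvV' hjV'
        · exact huV' hjV'
      intro p hp q hq hpq
      rcases Finset.mem_insert.1 hp with rfl | hp <;> rcases Finset.mem_insert.1 hq with rfl | hq
      · exact absurd rfl hpq
      · obtain ⟨q', hq', rfl⟩ := Finset.mem_image.1 hq
        rw [hfpair q']
        exact hdisjvu q' hq'
      · obtain ⟨p', hp', rfl⟩ := Finset.mem_image.1 hp
        rw [hfpair p', Finset.inter_comm]
        exact hdisjvu p' hp'
      · obtain ⟨p', hp', rfl⟩ := Finset.mem_image.1 hp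
        obtain ⟨q', hq', rfl⟩ := Finset.mem_image.1 hq
        have hne' : p' ≠ q' := fun h => hpq (by rw [h])
        rw [hfpair p', hfpair q']
        exact hM'disj p' hp' q' hq' hne'
    · rw [Finset.biUnion_insert]
      have himg : (M'.image f).biUnion (fun p => ({p.1, p.2} : Finset (Fin n))) =
          M'.biUnion (fun p => ({p.1, p.2} : Finset (Fin n))) := by
        ext j
        simp only [Finset.mem_biUnion, Finset.mem_image]
        constructor
        · rintro ⟨q, ⟨q', hq', rfl⟩, hj⟩
          exact ⟨q', hq', by rwa [hfpair q'] at hj⟩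
        · rintro ⟨q', hq', hj⟩
          exact ⟨f q', ⟨q', hq', rfl⟩, by rwa [hfpair q']⟩
      rw [himg, hM'union, hVeq]
      ext j
      simp only [Finset.mem_union, Finset.mem_insert, Finset.mem_singleton]
      tauto

lemma pair_sum {estar : ℝ} {x : Fin n → ℝ} (he : 0 < estar) (hx : IsNE G estar x)
    {v u : Fin n} (hleaf : G.neighborFinset v = {u}) : x v + x u = estar := by
  obtain ⟨hv0, hvs, hvc⟩ := hx v
  have hcv : cnSum G x v = x v + x u := by
    rw [cnSum, hleaf, Finset.sum_singleton]
  by_cases hxv : x v = 0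
  · obtain ⟨hu0, hus, huc⟩ := hx u
    have h1 : estar ≤ x u := by rw [hcv, hxv, zero_add] at hvs; exact hvs
    have hxu : x u ≠ 0 := by intro h; rw [h] at h1; linarith
    have h2 : cnSum G x u = estar := by
      rcases mul_eq_zero.1 huc with h | h
      · exact absurd h hxu
      · linarith [sub_eq_zero.1 h]
    have h3 : x u ≤ cnSum G x u := by
      rw [cnSum]
      have hnn : 0 ≤ ∑ j ∈ G.neighborFinset u, x j :=
        Finset.sum_nonneg (fun j _ => (hx j).1)
      linarith
    rw [hxv]
    linarith
  · have h2 : cnSum G x v = estar := by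
      rcases mul_eq_zero.1 hvc with h | h
      · exact absurd h hxv
      · linarith [sub_eq_zero.1 h]
    linarith [hcv]

lemma wc_univ (hwc : ∀ S T : Finset (Fin n), IsMaxIndep G S → IsMaxIndep G T →
    S.card = T.card) : WcV G (Finset.univ : Finset (Fin n)) := by
  have key : ∀ S, MaxV G Finset.univ S → IsMaxIndep G S := by
    intro S hS
    refine ⟨hS.1.2, ?_⟩
    intro T hT hsub
    refine Finset.Subset.antisymm ?_ hsub
    intro t ht
    by_contra hts
    obtain ⟨s, hsS, hadj⟩ := hS.2 t (Finset.mem_univ t) hts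
    exact hT s (hsub hsS) t ht hadj
  intro S T hS hT
  exact hwc S T (key S hS) (key T hT)

end Stmt18

/-- On a well-covered forest without isolated agents, every Nash equilibrium
requires the same total effort `½ e* n`; equivalently every equilibrium
incurs total cost `½ c e* n`. -/
theorem stmt_18 {n : ℕ} (G : SimpleGraph (Fin n)) [DecidableRel G.Adj]
    (hG : G.IsAcyclic) (hiso : ∀ v, 0 < G.degree v)
    (hwc : ∀ S T : Finset (Fin n), IsMaxIndep G S → IsMaxIndep G T →
      S.card = T.card)
    (estar c : ℝ) (he : 0 < estar) (hc : 0 < c)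
    (x : Fin n → ℝ) (hx : IsNE G estar x) :
    (∑ i, x i) = (1 / 2) * estar * n ∧
      c * ∑ i, x i = (1 / 2) * c * estar * n := by
  classical
  have hdegu : ∀ i ∈ (Finset.univ : Finset (Fin n)), (Stmt18.nbr G Finset.univ i).Nonempty := by
    intro i _
    have h : 0 < (G.neighborFinset i).card := hiso i
    obtain ⟨j, hj⟩ := Finset.card_pos.1 h
    exact ⟨j, (Stmt18.mem_nbr G).2 ⟨Finset.mem_univ j,
      (G.mem_neighborFinset i j).1 hj⟩⟩
  obtain ⟨M, hMleaf, hMdisj, hMunion⟩ := Stmt18.matching_aux G hG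
    (Finset.univ : Finset (Fin n)).card Finset.univ le_rfl hdegu (Stmt18.wc_univ G hwc)
  have hnbr_univ : ∀ i, Stmt18.nbr G Finset.univ i = G.neighborFinset i := by
    intro i
    ext j
    simp [Stmt18.nbr, SimpleGraph.mem_neighborFinset]
  have hMne : ∀ p ∈ M, p.1 ≠ p.2 := by
    intro p hp
    have h1 : p.2 ∈ Stmt18.nbr G Finset.univ p.1 := by
      rw [hMleaf p hp]; exact Finset.mem_singleton_self _
    exact ((Stmt18.mem_nbr G).1 h1).2.ne
  have hdisjoint : ∀ p ∈ M, ∀ q ∈ M, p ≠ q →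
      Disjoint (({p.1, p.2} : Finset (Fin n))) {q.1, q.2} := by
    intro p hp q hq hpq
    rw [Finset.disjoint_iff_inter_eq_empty]
    exact hMdisj p hp q hq hpq
  have hsum : ∑ i, x i = ∑ p ∈ M, (x p.1 + x p.2) := by
    rw [← hMunion, Finset.sum_biUnion (fun p hp q hq hpq =>
      hdisjoint p (Finset.mem_coe.1 hp) q (Finset.mem_coe.1 hq) hpq)]
    refine Finset.sum_congr rfl fun p hp => ?_
    rw [Finset.sum_pair (hMne p hp)]
  have hpairsum : ∀ p ∈ M, x p.1 + x p.2 = estar := by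
    intro p hp
    exact Stmt18.pair_sum G he hx (by rw [← hnbr_univ]; exact hMleaf p hp)
  have hcard : n = 2 * M.card := by
    have h1 : (Finset.univ : Finset (Fin n)).card =
        ∑ p ∈ M, ({p.1, p.2} : Finset (Fin n)).card := by
      rw [← hMunion]
      exact Finset.card_biUnion hdisjoint
    rw [Finset.card_univ, Fintype.card_fin] at h1
    have h2 : ∑ p ∈ M, ({p.1, p.2} : Finset (Fin n)).card = ∑ _p ∈ M, 2 := by
      refine Finset.sum_congr rfl fun p hp => ?_
      rw [Finset.card_insert_of_notMem (by simp [hMne p hp]), Finset.card_singleton]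
    rw [h2, Finset.sum_const, smul_eq_mul] at h1
    omega
  have htot : ∑ i, x i = M.card * estar := by
    rw [hsum, Finset.sum_congr rfl hpairsum, Finset.sum_const, nsmul_eq_mul]
  have hncast : (n : ℝ) = 2 * M.card := by exact_mod_cast hcard
  have h1 : (∑ i, x i) = (1 / 2) * estar * n := by
    rw [htot, hncast]; ring
  exact ⟨h1, by rw [h1]; ring⟩
end
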